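/- arXiv:math/0410466 — 10 statements merged into one kernel-verified Lean document; each statement's English description precedes it below -/
import Mathlib

section
/- Suppose α, β ∈ ℕ₀^N with α ▷ β, and there exist integers m, n such that for every i, (r(β,i) − r(α,i))·κ + α_i − β_i is a rational multiple of mκ + n (as polynomials in κ). Then mn ≥ 0 and n ≠ 0. -/
/-- The rank function `r(α,i)` for a composition indexed by `1,…,N`. -/
def rnk (N : ℕ) (α : ℕ → ℕ) (i : ℕ) : ℕ :=
  ((Finset.Icc 1 N).filter fun j => α i < α j).card +
  ((Finset.Icc 1 i).filter fun j => α j = α i).card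

/-- The length `ℓ(α)`: largest index with a nonzero part. -/
def len (N : ℕ) (α : ℕ → ℕ) : ℕ :=
  ((Finset.Icc 1 N).filter fun j => α j ≠ 0).sup id

/-- The weight `|α| = Σ α_i`. -/
def wt (N : ℕ) (α : ℕ → ℕ) : ℕ := ∑ i ∈ Finset.Icc 1 N, α i

/-- The deformation `α̃_i = α_i - i·υ` with `υ = 1/(N+1)`. -/
def tilde (N : ℕ) (α : ℕ → ℕ) (i : ℕ) : ℚ := (α i : ℚ) - (i : ℚ) / ((N : ℚ) + 1)

/-- The leg-length `L(α;i,j)`. -/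
def leg (N : ℕ) (α : ℕ → ℕ) (i j : ℕ) : ℕ :=
  ((Finset.Icc 1 N).filter fun l => i < l ∧ j ≤ α l ∧ α l ≤ α i).card +
  ((Finset.Icc 1 N).filter fun l => l < i ∧ j ≤ α l + 1 ∧ α l + 1 ≤ α i).card

/-- The decreasing rearrangement `α⁺`: `α⁺_i = α_{w(i)}` where `w` inverts the rank. -/
def part (N : ℕ) (α : ℕ → ℕ) (i : ℕ) : ℕ :=
  ∑ j ∈ (Finset.Icc 1 N).filter (fun j => rnk N α j = i), α j

/-- Strict dominance order `α ≻ β`. -/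
def sdom (N : ℕ) (α β : ℕ → ℕ) : Prop :=
  (∃ i ∈ Finset.Icc 1 N, α i ≠ β i) ∧
  ∀ k, k ≤ N → ∑ j ∈ Finset.Icc 1 k, β j ≤ ∑ j ∈ Finset.Icc 1 k, α j

/-- The order `α ▷ β`. -/
def tri (N : ℕ) (α β : ℕ → ℕ) : Prop :=
  wt N α = wt N β ∧
  (sdom N (part N α) (part N β) ∨
    ((∀ i ∈ Finset.Icc 1 N, part N α i = part N β i) ∧ sdom N α β))


def hfun (γ : ℕ → ℕ) (i j : ℕ) : ℤ :=
  (if γ i < γ j then 1 else 0) + (if j ≤ i ∧ γ j = γ i then 1 else 0)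

lemma rnk_cast (N : ℕ) (γ : ℕ → ℕ) (i : ℕ) (hi : i ∈ Finset.Icc 1 N) :
    (rnk N γ i : ℤ) = ∑ j ∈ Finset.Icc 1 N, hfun γ i j := by
  rw [Finset.mem_Icc] at hi
  have h2 : (Finset.Icc 1 i).filter (fun j => γ j = γ i)
      = (Finset.Icc 1 N).filter (fun j => j ≤ i ∧ γ j = γ i) := by
    ext x
    simp only [Finset.mem_filter, Finset.mem_Icc]
    omega
  have : rnk N γ i = ∑ j ∈ Finset.Icc 1 N,
      ((if γ i < γ j then 1 else 0) + (if j ≤ i ∧ γ j = γ i then (1:ℕ) else 0)) := by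
    rw [rnk, h2, Finset.sum_add_distrib, Finset.card_filter, Finset.card_filter]
  rw [this]
  push_cast [hfun]
  rfl

lemma delta_antisym (α β : ℕ → ℕ) (i j : ℕ) :
    hfun β j i - hfun α j i = -(hfun β i j - hfun α i j) := by
  unfold hfun
  rcases eq_or_ne i j with h | h
  · subst h; simp
  · split_ifs <;> omega

lemma key_term (α β : ℕ → ℕ) (i j : ℕ) :
    0 ≤ (((α i : ℤ) - β i) - ((α j : ℤ) - β j)) * (hfun β i j - hfun α i j) := by
  unfold hfun
  split_ifs <;> norm_num <;> omega

lemma S_nonneg (N : ℕ) (α β : ℕ → ℕ) :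
    0 ≤ ∑ i ∈ Finset.Icc 1 N,
      ((α i : ℤ) - β i) * ((rnk N β i : ℤ) - rnk N α i) := by
  have h1 : ∑ i ∈ Finset.Icc 1 N, ((α i : ℤ) - β i) * ((rnk N β i : ℤ) - rnk N α i)
      = ∑ i ∈ Finset.Icc 1 N, ∑ j ∈ Finset.Icc 1 N,
          ((α i : ℤ) - β i) * (hfun β i j - hfun α i j) := by
    refine Finset.sum_congr rfl fun i hi => ?_
    rw [rnk_cast N β i hi, rnk_cast N α i hi, ← Finset.sum_sub_distrib, Finset.mul_sum]
  set T := ∑ i ∈ Finset.Icc 1 N, ∑ j ∈ Finset.Icc 1 N,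
      ((α i : ℤ) - β i) * (hfun β i j - hfun α i j) with hT
  have h2 : T = ∑ i ∈ Finset.Icc 1 N, ∑ j ∈ Finset.Icc 1 N,
      (-(((α j : ℤ) - β j) * (hfun β i j - hfun α i j))) := by
    rw [hT, Finset.sum_comm]
    refine Finset.sum_congr rfl fun i _ => Finset.sum_congr rfl fun j _ => ?_
    rw [delta_antisym α β i j]
    ring
  have h3 : 2 * T = ∑ i ∈ Finset.Icc 1 N, ∑ j ∈ Finset.Icc 1 N,
      ((((α i : ℤ) - β i) - ((α j : ℤ) - β j)) * (hfun β i j - hfun α i j)) := by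
    rw [two_mul]
    nth_rewrite 2 [h2]
    rw [← Finset.sum_add_distrib]
    refine Finset.sum_congr rfl fun i _ => ?_
    rw [← Finset.sum_add_distrib]
    refine Finset.sum_congr rfl fun j _ => by ring
  have h4 : 0 ≤ 2 * T := by
    rw [h3]
    exact Finset.sum_nonneg fun i _ => Finset.sum_nonneg fun j _ => key_term α β i j
  rw [h1]
  linarith

lemma rnk_congr (N : ℕ) {α β : ℕ → ℕ} (h : ∀ x ∈ Finset.Icc 1 N, α x = β x)
    {j : ℕ} (hj : j ∈ Finset.Icc 1 N) : rnk N α j = rnk N β j := by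
  have hj' := Finset.mem_Icc.mp hj
  unfold rnk
  congr 1
  · exact congrArg Finset.card (Finset.filter_congr fun x hx => by
      rw [h j hj, h x hx])
  · exact congrArg Finset.card (Finset.filter_congr fun x hx => by
      have hx' := Finset.mem_Icc.mp hx
      rw [h j hj, h x (Finset.mem_Icc.mpr ⟨hx'.1, hx'.2.trans hj'.2⟩)])

lemma part_congr (N : ℕ) {α β : ℕ → ℕ} (h : ∀ x ∈ Finset.Icc 1 N, α x = β x)
    (i : ℕ) : part N α i = part N β i := by
  unfold part
  rw [Finset.filter_congr (fun x hx => by rw [rnk_congr N h hx])]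
  exact Finset.sum_congr rfl fun x hx => h x (Finset.mem_of_mem_filter x hx)

/-- `(α,β)` is a `(-n/m)`-critical pair. -/
def critical (N m n : ℕ) (α β : ℕ → ℕ) : Prop :=
  tri N α β ∧ ∀ i ∈ Finset.Icc 1 N,
    ((rnk N β i : ℤ) - (rnk N α i : ℤ)) * (n : ℤ) = (m : ℤ) * ((α i : ℤ) - (β i : ℤ))

/-- if `α ▷ β` and every `(r(β,i)-r(α,i))κ + α_i - β_i` is a rational
multiple of `mκ + n`, then `mn ≥ 0` and `n ≠ 0`. -/
theorem critical_sign (N : ℕ) (α β : ℕ → ℕ) (m n : ℤ)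
    (hord : tri N α β)
    (hdiv : ∀ i ∈ Finset.Icc 1 N, ∃ c : ℚ,
      ((rnk N β i : ℚ) - (rnk N α i : ℚ)) = c * (m : ℚ) ∧
      ((α i : ℚ) - (β i : ℚ)) = c * (n : ℚ)) :
    0 ≤ m * n ∧ n ≠ 0 := by
  -- there is some index where α and β differ
  have hex : ∃ i ∈ Finset.Icc 1 N, α i ≠ β i := by
    rcases hord with ⟨hw, hc | hc⟩
    · by_contra hcon
      push_neg at hcon
      obtain ⟨i, hi, hne⟩ := hc.1
      exact hne (part_congr N hcon i)
    · exact hc.2.1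
  obtain ⟨i0, hi0, hne0⟩ := hex
  have hd0 : ((α i0 : ℤ) - β i0) ≠ 0 := by
    intro h; apply hne0; omega
  -- n ≠ 0
  have hn : n ≠ 0 := by
    intro hn0
    obtain ⟨c, _, h2⟩ := hdiv i0 hi0
    rw [hn0] at h2
    push_cast at h2
    simp at h2
    apply hne0
    have : (α i0 : ℚ) = β i0 := by linarith
    exact_mod_cast this
  -- the integer divisibility relation
  have eqn : ∀ i ∈ Finset.Icc 1 N,
      ((rnk N β i : ℤ) - rnk N α i) * n = m * ((α i : ℤ) - β i) := by
    intro i hi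
    obtain ⟨c, h1, h2⟩ := hdiv i hi
    have hq : ((rnk N β i : ℚ) - rnk N α i) * n = m * ((α i : ℚ) - β i) := by
      rw [h1, h2]; ring
    exact_mod_cast hq
  refine ⟨?_, hn⟩
  by_contra hmn
  push_neg at hmn
  have hm : m ≠ 0 := by
    intro h; rw [h] at hmn; simp at hmn
  set S := ∑ i ∈ Finset.Icc 1 N,
      ((α i : ℤ) - β i) * ((rnk N β i : ℤ) - rnk N α i) with hS
  set Q := ∑ i ∈ Finset.Icc 1 N, ((α i : ℤ) - β i) ^ 2 with hQdef
  have hSQ : S * n = m * Q := by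
    rw [hS, hQdef, Finset.sum_mul, Finset.mul_sum]
    refine Finset.sum_congr rfl fun i hi => ?_
    linear_combination ((α i : ℤ) - β i) * eqn i hi
  have hQpos : 0 < Q := by
    refine Finset.sum_pos' (fun i _ => sq_nonneg _) ⟨i0, hi0, ?_⟩
    positivity
  have hSnn : 0 ≤ S := S_nonneg N α β
  have hkey : S * (m * n) = m * m * Q := by linear_combination m * hSQ
  have h5 : S * (m * n) ≤ 0 := mul_nonpos_of_nonneg_of_nonpos hSnn hmn.le
  have h6 : 0 < m * m * Q := mul_pos (mul_self_pos.mpr hm) hQpos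
  linarith
end

section
/- If (α, β) is a (−n/m)-critical pair with m, n ≥ 1, then ℓ(β) ≤ ℓ(α) + |α|, where ℓ denotes the length (largest index of a nonzero part) and |α| = Σ_i α_i. -/
lemma rnk_add_eq (N : ℕ) (α : ℕ → ℕ) (j : ℕ) (hjN : j ≤ N) (hz : α j = 0) :
    rnk N α j + ((Finset.Icc 1 j).filter fun l => α l ≠ 0).card
      = j + ((Finset.Icc 1 N).filter fun l => α l ≠ 0).card := by
  unfold rnk
  have h1 : ((Finset.Icc 1 N).filter fun l => α j < α l)
      = ((Finset.Icc 1 N).filter fun l => α l ≠ 0) := by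
    apply Finset.filter_congr; intro l _; simp [hz, Nat.pos_iff_ne_zero]
  have h2 : ((Finset.Icc 1 j).filter fun l => α l = α j)
      = ((Finset.Icc 1 j).filter fun l => ¬ (α l ≠ 0)) := by
    apply Finset.filter_congr; intro l _; simp [hz]
  have h3 : ((Finset.Icc 1 j).filter fun l => α l ≠ 0).card
      + ((Finset.Icc 1 j).filter fun l => ¬ (α l ≠ 0)).card = j := by
    rw [Finset.card_filter_add_card_filter_not, Nat.card_Icc]; omega
  rw [h1, h2]
  omega

lemma filter_subset_of_le (N : ℕ) (α : ℕ → ℕ) (j : ℕ) (hjN : j ≤ N) :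
    ((Finset.Icc 1 j).filter fun l => α l ≠ 0)
      ⊆ ((Finset.Icc 1 N).filter fun l => α l ≠ 0) := by
  apply Finset.filter_subset_filter
  exact Finset.Icc_subset_Icc_right hjN

/-- If every nonzero index is `≤ j` and `α j = 0`, then `rnk N α j = j`. -/
lemma rnk_eq_of_all (N : ℕ) (α : ℕ → ℕ) (j : ℕ) (hjN : j ≤ N) (hz : α j = 0)
    (hall : ∀ l ∈ Finset.Icc 1 N, α l ≠ 0 → l ≤ j) : rnk N α j = j := by
  have key := rnk_add_eq N α j hjN hz
  have heq : ((Finset.Icc 1 j).filter fun l => α l ≠ 0)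
      = ((Finset.Icc 1 N).filter fun l => α l ≠ 0) := by
    apply Finset.Subset.antisymm (filter_subset_of_le N α j hjN)
    intro l hl
    rw [Finset.mem_filter] at hl ⊢
    refine ⟨?_, hl.2⟩
    rw [Finset.mem_Icc] at hl ⊢
    exact ⟨hl.1.1, hall l (Finset.mem_Icc.mpr hl.1) hl.2⟩
  rw [heq] at key
  omega

/-- Conversely if `rnk N α j = j` and `α j = 0` then all nonzero indices are `≤ j`. -/
lemma all_le_of_rnk_eq (N : ℕ) (α : ℕ → ℕ) (j : ℕ) (hjN : j ≤ N) (hz : α j = 0)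
    (hr : rnk N α j = j) : ∀ l ∈ Finset.Icc 1 N, α l ≠ 0 → l ≤ j := by
  have key := rnk_add_eq N α j hjN hz
  rw [hr] at key
  have hcard : (((Finset.Icc 1 N).filter fun l => α l ≠ 0)).card
      ≤ (((Finset.Icc 1 j).filter fun l => α l ≠ 0)).card := by omega
  have heq := Finset.eq_of_subset_of_card_le (filter_subset_of_le N α j hjN) hcard
  intro l hl hlne
  have : l ∈ ((Finset.Icc 1 j).filter fun l => α l ≠ 0) := by
    rw [heq]; exact Finset.mem_filter.mpr ⟨hl, hlne⟩
  rw [Finset.mem_filter, Finset.mem_Icc] at this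
  exact this.1.2

lemma le_len (N : ℕ) (α : ℕ → ℕ) (l : ℕ) (hl : l ∈ Finset.Icc 1 N) (hne : α l ≠ 0) :
    l ≤ len N α :=
  Finset.le_sup (f := id) (Finset.mem_filter.mpr ⟨hl, hne⟩)

/-- for a `(-n/m)`-critical pair, `ℓ(β) ≤ ℓ(α) + |α|`. -/
theorem critical_len_bound (N : ℕ) (α β : ℕ → ℕ) (m n : ℕ) (hm : 1 ≤ m) (hn : 1 ≤ n)
    (hcrit : critical N m n α β) :
    len N β ≤ len N α + wt N α := by
  obtain ⟨⟨hwt, _⟩, hcr⟩ := hcrit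
  by_contra hcon
  push_neg at hcon
  set L := len N α with hL
  set W := wt N α with hW
  set i := len N β with hi
  -- the filter set for β is nonempty and i is a member
  have hne : ((Finset.Icc 1 N).filter fun j => β j ≠ 0).Nonempty := by
    by_contra hemp
    rw [Finset.not_nonempty_iff_eq_empty] at hemp
    have : i = 0 := by
      rw [hi]; unfold len; rw [hemp]; simp
    omega
  have hmem : i ∈ (Finset.Icc 1 N).filter fun j => β j ≠ 0 := by
    have h1 : i = ((Finset.Icc 1 N).filter fun j => β j ≠ 0).max' hne := by
      rw [hi]; unfold len
      rw [Finset.max'_eq_sup' _ hne, Finset.sup'_eq_sup hne id]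
    rw [h1]; exact Finset.max'_mem _ hne
  rw [Finset.mem_filter] at hmem
  obtain ⟨hiIcc, hibne⟩ := hmem
  rw [Finset.mem_Icc] at hiIcc
  -- every index in (L, i] has β nonzero
  have hnz : ∀ j ∈ Finset.Icc (L + 1) i, β j ≠ 0 := by
    intro j hj
    rw [Finset.mem_Icc] at hj
    by_contra hbz
    have hjN : j ≤ N := le_trans hj.2 hiIcc.2
    have hjIcc : j ∈ Finset.Icc 1 N := Finset.mem_Icc.mpr ⟨by omega, hjN⟩
    -- α j = 0
    have haz : α j = 0 := by
      by_contra haz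
      have := le_len N α j hjIcc haz
      omega
    -- rnk N α j = j
    have hra : rnk N α j = j := by
      apply rnk_eq_of_all N α j hjN haz
      intro l hl hlne
      have := le_len N α l hl hlne
      omega
    -- rnk N β j = rnk N α j from criticality
    have hcrj := hcr j hjIcc
    rw [haz, hbz] at hcrj
    simp at hcrj
    have hrb : rnk N β j = j := by
      rcases hcrj with h | h
      · omega
      · omega
    -- all nonzero β indices ≤ j, contradicting β i ≠ 0 unless i ≤ j
    have hile := all_le_of_rnk_eq N β j hjN hbz hrb i (Finset.mem_Icc.mpr hiIcc) hibne
    have : j = i := le_antisymm hj.2 hile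
    rw [this] at hbz
    exact hibne hbz
  -- count: Icc (L+1) i ⊆ nonzero set of β
  have hsub : Finset.Icc (L + 1) i ⊆ (Finset.Icc 1 N).filter fun j => β j ≠ 0 := by
    intro j hj
    have hj' := hj
    rw [Finset.mem_Icc] at hj'
    refine Finset.mem_filter.mpr ⟨Finset.mem_Icc.mpr ⟨by omega, le_trans hj'.2 hiIcc.2⟩, hnz j hj⟩
  have hcard1 : (Finset.Icc (L + 1) i).card = i - L := by
    rw [Nat.card_Icc]; omega
  have hcard2 := Finset.card_le_card hsub
  -- card of nonzero set ≤ wt N β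
  have hcard3 : ((Finset.Icc 1 N).filter fun j => β j ≠ 0).card ≤ wt N β := by
    unfold wt
    calc ((Finset.Icc 1 N).filter fun j => β j ≠ 0).card
        = ∑ j ∈ (Finset.Icc 1 N).filter fun j => β j ≠ 0, 1 := by
          rw [Finset.card_eq_sum_ones]
      _ ≤ ∑ j ∈ (Finset.Icc 1 N).filter fun j => β j ≠ 0, β j := by
          apply Finset.sum_le_sum
          intro j hj
          have := (Finset.mem_filter.mp hj).2
          omega
      _ ≤ ∑ j ∈ Finset.Icc 1 N, β j :=
          Finset.sum_le_sum_of_subset (Finset.filter_subset _ _)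
  rw [← hwt] at hcard3
  omega
end

section
/- Let (α, β) be a (−n/m)-critical pair with m, n ≥ 1. If i > ℓ(α) and β_i = 0, then β_j = 0 for all j > i. -/
/-- for a `(-n/m)`-critical pair, if `i > ℓ(α)` and `β_i = 0`,
then `β_j = 0` for all `j > i`. -/
theorem critical_zero_tail (N : ℕ) (α β : ℕ → ℕ) (m n : ℕ) (hm : 1 ≤ m) (hn : 1 ≤ n)
    (hcrit : critical N m n α β) (i : ℕ) (hi1 : 1 ≤ i) (hiN : i ≤ N)
    (hlen : len N α < i) (hβi : β i = 0) :
    ∀ j, i < j → j ≤ N → β j = 0 := by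
  intro j hij hjN
  by_contra hβj
  obtain ⟨-, hc⟩ := hcrit
  have hiIcc : i ∈ Finset.Icc 1 N := Finset.mem_Icc.mpr ⟨hi1, hiN⟩
  have hα0 : ∀ l, 1 ≤ l → l ≤ N → α l ≠ 0 → l < i := by
    intro l h1 hlN hl
    have : l ≤ len N α := Finset.le_sup (f := id)
      (Finset.mem_filter.mpr ⟨Finset.mem_Icc.mpr ⟨h1, hlN⟩, hl⟩)
    omega
  have hαi : α i = 0 := by
    by_contra h
    exact absurd (hα0 i hi1 hiN h) (lt_irrefl i)
  -- rnk N α i = i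
  have hrα : rnk N α i = i := by
    unfold rnk
    have h1 : (Finset.Icc 1 N).filter (fun l => α i < α l)
        = (Finset.Icc 1 i).filter (fun l => ¬ (α l = α i)) := by
      ext l
      simp only [Finset.mem_filter, Finset.mem_Icc, hαi]
      constructor
      · rintro ⟨⟨ha, hb⟩, h3⟩
        exact ⟨⟨ha, le_of_lt (hα0 l ha hb (by omega))⟩, by omega⟩
      · rintro ⟨⟨ha, hb⟩, h3⟩
        exact ⟨⟨ha, le_trans hb hiN⟩, by omega⟩
    rw [h1, add_comm, Finset.card_filter_add_card_filter_not, Nat.card_Icc]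
    omega
  -- criticality at i forces rnk N β i = i
  have hcri := hc i hiIcc
  have h0 : ((rnk N β i : ℤ) - rnk N α i) * n = 0 := by
    rw [hcri, hαi, hβi]; ring
  have hn0 : (n : ℤ) ≠ 0 := by exact_mod_cast (by omega : n ≠ 0)
  have hsub : (rnk N β i : ℤ) - rnk N α i = 0 := (mul_eq_zero.mp h0).resolve_right hn0
  have hrβ : rnk N β i = i := by
    have : (rnk N β i : ℤ) = rnk N α i := by linarith
    have h2 : rnk N β i = rnk N α i := by exact_mod_cast this
    omega
  -- but β j > 0 for j > i forces rnk N β i ≥ i + 1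
  have hA : insert j ((Finset.Icc 1 i).filter (fun l => β i < β l))
      ⊆ (Finset.Icc 1 N).filter (fun l => β i < β l) := by
    intro l hl
    simp only [Finset.mem_insert, Finset.mem_filter, Finset.mem_Icc] at hl ⊢
    rcases hl with rfl | ⟨⟨ha, hb⟩, h3⟩
    · exact ⟨⟨by omega, hjN⟩, by omega⟩
    · exact ⟨⟨ha, le_trans hb hiN⟩, h3⟩
  have hjA : j ∉ (Finset.Icc 1 i).filter (fun l => β i < β l) := by
    simp only [Finset.mem_filter, Finset.mem_Icc]; omega
  have hcard1 : ((Finset.Icc 1 i).filter (fun l => β i < β l)).card + 1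
      ≤ ((Finset.Icc 1 N).filter (fun l => β i < β l)).card := by
    have h := Finset.card_le_card hA
    rwa [Finset.card_insert_of_notMem hjA] at h
  have hcard2 : ((Finset.Icc 1 i).filter (fun l => β i < β l)).card
      + ((Finset.Icc 1 i).filter (fun l => β l = β i)).card = i := by
    have h := Finset.card_filter_add_card_filter_not
      (s := Finset.Icc 1 i) (p := fun l => β i < β l)
    have he : (Finset.Icc 1 i).filter (fun l => ¬ (β i < β l))
        = (Finset.Icc 1 i).filter (fun l => β l = β i) := by
      apply Finset.filter_congr
      intro l _
      simp only [hβi, eq_iff_iff]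
      omega
    rw [he] at h
    rw [h, Nat.card_Icc]
    omega
  unfold rnk at hrβ
  omega
end

section
/- For α ∈ ℕ₀^N with υ = 1/(N+1) and α̃_i := α_i − i·υ, for every i with 1 ≤ i ≤ ℓ(α) and every j with 1 ≤ j ≤ α_i, the leg-length satisfies L(α;i,j) = #{l : j − i·υ − 1 < α̃_l < α̃_i}. -/
lemma key_lt_iff (a b : ℕ) (ε : ℚ) (h0 : 0 < ε) (h1 : ε < 1) :
    ((a : ℚ) < (b : ℚ) + ε ↔ a ≤ b) := by
  constructor
  · intro h
    have h2 : (a : ℚ) < (b : ℚ) + 1 := by linarith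
    have h3 : a < b + 1 := by exact_mod_cast h2
    omega
  · intro h
    have : (a : ℚ) ≤ (b : ℚ) := by exact_mod_cast h
    linarith

/-- the leg-length in terms of the deformation `α̃`:
`L(α;i,j) = #{l : j - iυ - 1 < α̃_l < α̃_i}`. -/
theorem leg_eq_tilde_count (N : ℕ) (α : ℕ → ℕ) (i j : ℕ)
    (hi1 : 1 ≤ i) (hi2 : i ≤ len N α) (hj1 : 1 ≤ j) (hj2 : j ≤ α i) :
    leg N α i j =
      ((Finset.Icc 1 N).filter fun l =>
        (j : ℚ) - (i : ℚ) / ((N : ℚ) + 1) - 1 < tilde N α l ∧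
        tilde N α l < tilde N α i).card := by
  classical
  have hiN : i ≤ N := hi2.trans (Finset.sup_le fun b hb => by
    simpa using (Finset.mem_Icc.mp (Finset.mem_filter.mp hb).1).2)
  have hNpos : (0 : ℚ) < (N : ℚ) + 1 := by positivity
  have hdisj : Disjoint
      ((Finset.Icc 1 N).filter fun l => i < l ∧ j ≤ α l ∧ α l ≤ α i)
      ((Finset.Icc 1 N).filter fun l => l < i ∧ j ≤ α l + 1 ∧ α l + 1 ≤ α i) := by
    refine Finset.disjoint_left.mpr fun x hx1 hx2 => ?_
    have h1 := (Finset.mem_filter.mp hx1).2.1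
    have h2 := (Finset.mem_filter.mp hx2).2.1
    omega
  rw [leg, ← Finset.card_union_of_disjoint hdisj, ← Finset.filter_or]
  congr 1
  apply Finset.filter_congr
  intro l hl
  obtain ⟨hl1, hlN⟩ := Finset.mem_Icc.mp hl
  simp only [tilde]
  have hi_lt : (i : ℚ) / ((N : ℚ) + 1) < 1 := by
    rw [div_lt_one hNpos]
    exact_mod_cast Nat.lt_succ_of_le hiN
  have hl_lt : (l : ℚ) / ((N : ℚ) + 1) < 1 := by
    rw [div_lt_one hNpos]
    exact_mod_cast Nat.lt_succ_of_le hlN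
  have hi_pos : 0 < (i : ℚ) / ((N : ℚ) + 1) := by positivity
  have hl_pos : 0 < (l : ℚ) / ((N : ℚ) + 1) := by positivity
  rcases lt_trichotomy l i with h | h | h
  · -- l < i
    have hε0 : 0 < (i : ℚ) / ((N : ℚ) + 1) - (l : ℚ) / ((N : ℚ) + 1) := by
      have : (l : ℚ) / ((N : ℚ) + 1) < (i : ℚ) / ((N : ℚ) + 1) :=
        (div_lt_div_iff_of_pos_right hNpos).mpr (by exact_mod_cast h)
      linarith
    have hε1 : (i : ℚ) / ((N : ℚ) + 1) - (l : ℚ) / ((N : ℚ) + 1) < 1 := by linarith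
    have e1 : ((j : ℚ) - (i : ℚ) / ((N : ℚ) + 1) - 1 < (α l : ℚ) - (l : ℚ) / ((N : ℚ) + 1))
        ↔ j ≤ α l + 1 := by
      rw [← key_lt_iff j (α l + 1) _ hε0 hε1]
      push_cast
      constructor <;> intro <;> linarith
    have e2 : ((α l : ℚ) - (l : ℚ) / ((N : ℚ) + 1) < (α i : ℚ) - (i : ℚ) / ((N : ℚ) + 1))
        ↔ α l + 1 ≤ α i := by
      rw [← key_lt_iff (α l + 1) (α i) (1 - ((i : ℚ) / ((N : ℚ) + 1) - (l : ℚ) / ((N : ℚ) + 1)))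
        (by linarith) (by linarith)]
      push_cast
      constructor <;> intro <;> linarith
    rw [e1, e2]
    constructor
    · rintro (⟨h', _⟩ | ⟨_, h2', h3'⟩)
      · omega
      · exact ⟨h2', h3'⟩
    · intro ⟨h1', h2'⟩
      exact Or.inr ⟨h, h1', h2'⟩
  · -- l = i
    subst h
    simp
  · -- i < l
    have hε0 : 0 < (l : ℚ) / ((N : ℚ) + 1) - (i : ℚ) / ((N : ℚ) + 1) := by
      have : (i : ℚ) / ((N : ℚ) + 1) < (l : ℚ) / ((N : ℚ) + 1) :=
        (div_lt_div_iff_of_pos_right hNpos).mpr (by exact_mod_cast h)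
      linarith
    have hε1 : (l : ℚ) / ((N : ℚ) + 1) - (i : ℚ) / ((N : ℚ) + 1) < 1 := by linarith
    have e1 : ((j : ℚ) - (i : ℚ) / ((N : ℚ) + 1) - 1 < (α l : ℚ) - (l : ℚ) / ((N : ℚ) + 1))
        ↔ j ≤ α l := by
      rw [← key_lt_iff j (α l) (1 - ((l : ℚ) / ((N : ℚ) + 1) - (i : ℚ) / ((N : ℚ) + 1)))
        (by linarith) (by linarith)]
      constructor <;> intro <;> linarith
    have e2 : ((α l : ℚ) - (l : ℚ) / ((N : ℚ) + 1) < (α i : ℚ) - (i : ℚ) / ((N : ℚ) + 1))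
        ↔ α l ≤ α i := by
      rw [← key_lt_iff (α l) (α i) ((l : ℚ) / ((N : ℚ) + 1) - (i : ℚ) / ((N : ℚ) + 1)) hε0 hε1]
      constructor <;> intro <;> linarith
    rw [e1, e2]
    constructor
    · rintro (⟨_, h2', h3'⟩ | ⟨h', _⟩)
      · exact ⟨h2', h3'⟩
      · omega
    · intro ⟨h1', h2'⟩
      exact Or.inl ⟨h, h1', h2'⟩
end

section
/- With α, w, m, n as in the construction (1 ≤ n ≤ α_{w(1)}, m − 1 = L(α;w(1),α_{w(1)}+1−n)), the number m has the characterization m − 1 = #{l : α̃_{w(1)} − n < α̃_l < α̃_{w(1)}}, i.e., α̃_{w(m)} > α̃_{w(1)} − n > α̃_{w(j)} for all j > m. -/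
lemma tilde_lt_iff (N : ℕ) (α : ℕ → ℕ) {i j : ℕ} (hi1 : 1 ≤ i) (hiN : i ≤ N)
    (hj1 : 1 ≤ j) (hjN : j ≤ N) :
    tilde N α i < tilde N α j ↔ (α i < α j ∨ (α i = α j ∧ j < i)) := by
  have hq : (0:ℚ) < (N:ℚ) + 1 := by positivity
  have hiq : (i:ℚ) / ((N:ℚ)+1) < 1 := by
    rw [div_lt_one hq]; exact_mod_cast Nat.lt_succ_of_le hiN
  have hjq : (j:ℚ) / ((N:ℚ)+1) < 1 := by
    rw [div_lt_one hq]; exact_mod_cast Nat.lt_succ_of_le hjN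
  have hip : (0:ℚ) < (i:ℚ) / ((N:ℚ)+1) := by positivity
  have hjp : (0:ℚ) < (j:ℚ) / ((N:ℚ)+1) := by positivity
  unfold tilde
  constructor
  · intro h
    rcases lt_trichotomy (α i) (α j) with h1 | h1 | h1
    · exact Or.inl h1
    · refine Or.inr ⟨h1, ?_⟩
      rw [h1] at h
      have : (j:ℚ)/((N:ℚ)+1) < (i:ℚ)/((N:ℚ)+1) := by linarith
      have := (div_lt_div_iff_of_pos_right hq).mp this
      exact_mod_cast this
    · exfalso
      have : (α j : ℚ) + 1 ≤ (α i : ℚ) := by exact_mod_cast h1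
      linarith
  · rintro (h1 | ⟨h1, h2⟩)
    · have : (α i : ℚ) + 1 ≤ (α j : ℚ) := by exact_mod_cast h1
      linarith
    · rw [h1]
      have : (j:ℚ) < (i:ℚ) := by exact_mod_cast h2
      have : (j:ℚ)/((N:ℚ)+1) < (i:ℚ)/((N:ℚ)+1) :=
        (div_lt_div_iff_of_pos_right hq).mpr this
      linarith

lemma tilde_inj (N : ℕ) (α : ℕ → ℕ) {i j : ℕ} (hi1 : 1 ≤ i) (hiN : i ≤ N)
    (hj1 : 1 ≤ j) (hjN : j ≤ N) (h : tilde N α i = tilde N α j) : i = j := by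
  have h1 := (tilde_lt_iff N α hi1 hiN hj1 hjN).not.mp (by rw [h]; exact lt_irrefl _)
  have h2 := (tilde_lt_iff N α hj1 hjN hi1 hiN).not.mp (by rw [h]; exact lt_irrefl _)
  push_neg at h1 h2
  omega

lemma tilde_le_iff (N : ℕ) (α : ℕ → ℕ) {i j : ℕ} (hi1 : 1 ≤ i) (hiN : i ≤ N)
    (hj1 : 1 ≤ j) (hjN : j ≤ N) :
    tilde N α i ≤ tilde N α j ↔ (α i < α j ∨ (α i = α j ∧ j ≤ i)) := by
  rw [le_iff_lt_or_eq, tilde_lt_iff N α hi1 hiN hj1 hjN]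
  constructor
  · rintro ((h | ⟨h1, h2⟩) | h)
    · exact Or.inl h
    · exact Or.inr ⟨h1, le_of_lt h2⟩
    · have := tilde_inj N α hi1 hiN hj1 hjN h
      subst this; exact Or.inr ⟨rfl, le_rfl⟩
  · rintro (h | ⟨h1, h2⟩)
    · exact Or.inl (Or.inl h)
    · rcases eq_or_lt_of_le h2 with h3 | h3
      · subst h3; right
        unfold tilde; rw [h1]
      · exact Or.inl (Or.inr ⟨h1, h3⟩)

lemma rnk_of_gt (N : ℕ) (α : ℕ → ℕ) (hsupp : ∀ j, N < j → α j = 0) {i : ℕ}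
    (hNi : N < i) : rnk N α i = i := by
  have hz := Finset.card_filter_add_card_filter_not
    (s := Finset.Icc 1 N) (p := fun j => α j = 0)
  have hcard : (Finset.Icc 1 N).card = N := by simp
  have hsplit : Finset.Icc 1 i = Finset.Icc 1 N ∪ Finset.Ioc N i := by
    ext j
    simp only [Finset.mem_Icc, Finset.mem_union, Finset.mem_Ioc]
    omega
  unfold rnk
  rw [hsupp i hNi]
  have h1 : ((Finset.Icc 1 N).filter fun j => 0 < α j)
      = ((Finset.Icc 1 N).filter fun j => ¬ α j = 0) := by
    apply Finset.filter_congr; intro j _; simp [Nat.pos_iff_ne_zero]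
  have hdis : Disjoint ((Finset.Icc 1 N).filter fun j => α j = 0)
      ((Finset.Ioc N i).filter fun j => α j = 0) := by
    rw [Finset.disjoint_left]
    intro x hx hx'
    simp only [Finset.mem_filter, Finset.mem_Icc, Finset.mem_Ioc] at hx hx'
    omega
  rw [h1, hsplit, Finset.filter_union, Finset.card_union_of_disjoint hdis]
  have h2 : ((Finset.Ioc N i).filter fun j => α j = 0) = Finset.Ioc N i := by
    apply Finset.filter_true_of_mem; intro j hj; exact hsupp j (Finset.mem_Ioc.mp hj).1
  rw [h2]
  have h3 : (Finset.Ioc N i).card = i - N := by simp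
  omega

lemma rnk_eq_card (N : ℕ) (α : ℕ → ℕ) {l : ℕ} (hl1 : 1 ≤ l) (hlN : l ≤ N) :
    rnk N α l = ((Finset.Icc 1 N).filter fun j => tilde N α l ≤ tilde N α j).card := by
  have h1 : ((Finset.Icc 1 N).filter fun j => tilde N α l ≤ tilde N α j)
      = (Finset.Icc 1 N).filter fun j => α l < α j ∨ (α l = α j ∧ j ≤ l) := by
    apply Finset.filter_congr; intro j hj
    simp only [Finset.mem_Icc] at hj
    exact tilde_le_iff N α hl1 hlN hj.1 hj.2
  have hdis : Disjoint ((Finset.Icc 1 N).filter fun j => α l < α j)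
      ((Finset.Icc 1 N).filter fun j => α l = α j ∧ j ≤ l) := by
    rw [Finset.disjoint_left]
    intro x hx hx'
    simp only [Finset.mem_filter] at hx hx'
    omega
  rw [h1, Finset.filter_or, Finset.card_union_of_disjoint hdis]
  have h2 : ((Finset.Icc 1 N).filter fun j => α l = α j ∧ j ≤ l)
      = (Finset.Icc 1 l).filter fun j => α j = α l := by
    ext j
    simp only [Finset.mem_filter, Finset.mem_Icc]
    omega
  rw [h2]
  rfl

/-- the characterization of `m`:
`m - 1 = #{l : α̃_{w(1)} - n < α̃_l < α̃_{w(1)}}`, i.e.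
`α̃_{w(m)} > α̃_{w(1)} - n > α̃_{w(j)}` for `j > m`. -/
theorem m_characterization (N : ℕ) (α : ℕ → ℕ) (w : ℕ → ℕ) (m n : ℕ)
    (hN : 1 ≤ N)
    (hsupp : ∀ i, N < i → α i = 0)
    (hw : ∀ i, 1 ≤ i → 1 ≤ w i ∧ rnk N α (w i) = i)
    (hn1 : 1 ≤ n) (hn2 : n ≤ α (w 1))
    (hm : leg N α (w 1) (α (w 1) + 1 - n) + 1 = m) :
    ((Finset.Icc 1 N).filter fun l =>
        tilde N α (w 1) - (n : ℚ) < tilde N α l ∧ tilde N α l < tilde N α (w 1)).card + 1 = m ∧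
    tilde N α (w 1) - (n : ℚ) < tilde N α (w m) ∧
    (∀ j, m < j → j ≤ N → tilde N α (w j) < tilde N α (w 1) - (n : ℚ)) := by
  obtain ⟨hw1a, hw1b⟩ := hw 1 le_rfl
  set i₁ := w 1 with hi₁def
  have hi₁N : i₁ ≤ N := by
    by_contra h
    have := hsupp i₁ (by omega)
    omega
  -- analysis of rnk i₁ = 1
  have hmem : i₁ ∈ (Finset.Icc 1 i₁).filter fun j => α j = α i₁ := by
    simp [Finset.mem_filter, Finset.mem_Icc, hw1a]
  have hc2 : 0 < ((Finset.Icc 1 i₁).filter fun j => α j = α i₁).card :=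
    Finset.card_pos.mpr ⟨i₁, hmem⟩
  have hc1 : ((Finset.Icc 1 N).filter fun j => α i₁ < α j).card = 0 := by
    unfold rnk at hw1b; omega
  have hc2' : ((Finset.Icc 1 i₁).filter fun j => α j = α i₁).card = 1 := by
    unfold rnk at hw1b; omega
  have hmax : ∀ j, 1 ≤ j → j ≤ N → ¬ α i₁ < α j := by
    intro j h1 h2 hlt
    have hj : j ∈ (Finset.Icc 1 N).filter fun j => α i₁ < α j := by
      simp only [Finset.mem_filter, Finset.mem_Icc]
      exact ⟨⟨h1, h2⟩, hlt⟩
    rw [Finset.card_eq_zero] at hc1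
    rw [hc1] at hj
    exact absurd hj (Finset.notMem_empty j)
  have huniq : ∀ j, 1 ≤ j → j < i₁ → α j ≠ α i₁ := by
    intro j h1 h2 heq
    have hsub : ({j, i₁} : Finset ℕ) ⊆ (Finset.Icc 1 i₁).filter fun x => α x = α i₁ := by
      intro x hx
      simp only [Finset.mem_insert, Finset.mem_singleton] at hx
      rcases hx with rfl | rfl
      · simp only [Finset.mem_filter, Finset.mem_Icc]
        exact ⟨⟨h1, le_of_lt h2⟩, heq⟩
      · exact hmem
    have hpair : ({j, i₁} : Finset ℕ).card = 2 := Finset.card_pair (by omega)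
    have := Finset.card_le_card hsub
    omega
  have hmax' : ∀ l, 1 ≤ l → l ≤ N → l ≠ i₁ → tilde N α l < tilde N α i₁ := by
    intro l h1 h2 hl
    rw [tilde_lt_iff N α h1 h2 hw1a hi₁N]
    rcases lt_trichotomy (α l) (α i₁) with h | h | h
    · exact Or.inl h
    · refine Or.inr ⟨h, ?_⟩
      by_contra hh
      exact huniq l h1 (by omega) h
    · exact absurd h (hmax l h1 h2)
  have hwN : ∀ j, 1 ≤ j → j ≤ N → w j ≤ N := by
    intro j h1 h2
    by_contra h
    have h3 := rnk_of_gt N α hsupp (i := w j) (by omega)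
    have h4 := (hw j h1).2
    omega
  -- the deformed composition β with β i₁ = α i₁ - n
  set β : ℕ → ℕ := fun l => if l = i₁ then α i₁ - n else α l with hβdef
  have hβi : β i₁ = α i₁ - n := by simp [hβdef]
  have hβl : ∀ l, l ≠ i₁ → β l = α l := by intro l h; simp [hβdef, h]
  have hc : tilde N α i₁ - n = tilde N β i₁ := by
    unfold tilde
    rw [hβi, Nat.cast_sub hn2]
    ring
  have hct : ∀ l, l ≠ i₁ → tilde N β l = tilde N α l := by
    intro l h; unfold tilde; rw [hβl l h]
  have hne : ∀ l, 1 ≤ l → l ≤ N → tilde N α l ≠ tilde N α i₁ - n := by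
    intro l h1 h2 heq
    rw [hc] at heq
    by_cases hl : l = i₁
    · subst hl
      rw [← hc] at heq
      have hn0 : (1:ℚ) ≤ (n:ℚ) := by exact_mod_cast hn1
      linarith
    · rw [← hct l hl] at heq
      exact hl (tilde_inj N β h1 h2 hw1a hi₁N heq)
  -- the key pointwise characterization
  have key : ∀ l, 1 ≤ l → l ≤ N →
      ((tilde N α i₁ - n < tilde N α l ∧ tilde N α l < tilde N α i₁) ↔
       ((i₁ < l ∧ α i₁ + 1 - n ≤ α l ∧ α l ≤ α i₁) ∨
        (l < i₁ ∧ α i₁ + 1 - n ≤ α l + 1 ∧ α l + 1 ≤ α i₁))) := by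
    intro l h1 h2
    by_cases hl : l = i₁
    · subst hl
      constructor
      · rintro ⟨_, h⟩; exact absurd h (lt_irrefl _)
      · rintro (⟨h, _⟩ | ⟨h, _⟩) <;> exact absurd h (lt_irrefl _)
    · rw [hc, ← hct l hl, tilde_lt_iff N β hw1a hi₁N h1 h2, hct l hl,
        tilde_lt_iff N α h1 h2 hw1a hi₁N, hβi, hβl l hl]
      omega
  -- card of the middle set S equals leg
  have hScard : ((Finset.Icc 1 N).filter fun l =>
      tilde N α i₁ - (n:ℚ) < tilde N α l ∧ tilde N α l < tilde N α i₁).card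
      = leg N α i₁ (α i₁ + 1 - n) := by
    have h1 : ((Finset.Icc 1 N).filter fun l =>
        tilde N α i₁ - (n:ℚ) < tilde N α l ∧ tilde N α l < tilde N α i₁)
        = (Finset.Icc 1 N).filter fun l =>
          (i₁ < l ∧ α i₁ + 1 - n ≤ α l ∧ α l ≤ α i₁) ∨
          (l < i₁ ∧ α i₁ + 1 - n ≤ α l + 1 ∧ α l + 1 ≤ α i₁) := by
      apply Finset.filter_congr; intro l hl
      simp only [Finset.mem_Icc] at hl
      exact key l hl.1 hl.2
    have hdis : Disjoint
        ((Finset.Icc 1 N).filter fun l => i₁ < l ∧ α i₁ + 1 - n ≤ α l ∧ α l ≤ α i₁)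
        ((Finset.Icc 1 N).filter fun l => l < i₁ ∧ α i₁ + 1 - n ≤ α l + 1 ∧ α l + 1 ≤ α i₁) := by
      rw [Finset.disjoint_left]
      intro x hx hx'
      simp only [Finset.mem_filter] at hx hx'
      omega
    rw [h1, Finset.filter_or, Finset.card_union_of_disjoint hdis]
    rfl
  -- T = insert i₁ S
  have hTS : ((Finset.Icc 1 N).filter fun l => tilde N α i₁ - (n:ℚ) < tilde N α l)
      = insert i₁ ((Finset.Icc 1 N).filter fun l =>
          tilde N α i₁ - (n:ℚ) < tilde N α l ∧ tilde N α l < tilde N α i₁) := by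
    ext l
    simp only [Finset.mem_insert, Finset.mem_filter, Finset.mem_Icc]
    constructor
    · rintro ⟨⟨hl1, hl2⟩, hlt⟩
      by_cases hl : l = i₁
      · exact Or.inl hl
      · exact Or.inr ⟨⟨hl1, hl2⟩, hlt, hmax' l hl1 hl2 hl⟩
    · rintro (rfl | ⟨hmem', h1, h2⟩)
      · refine ⟨⟨hw1a, hi₁N⟩, ?_⟩
        have hn0 : (1:ℚ) ≤ (n:ℚ) := by exact_mod_cast hn1
        linarith
      · exact ⟨hmem', h1⟩
  have hi₁notS : i₁ ∉ (Finset.Icc 1 N).filter fun l =>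
      tilde N α i₁ - (n:ℚ) < tilde N α l ∧ tilde N α l < tilde N α i₁ := by
    simp only [Finset.mem_filter]
    rintro ⟨_, _, h⟩
    exact absurd h (lt_irrefl _)
  have hTcard : ((Finset.Icc 1 N).filter fun l =>
      tilde N α i₁ - (n:ℚ) < tilde N α l).card = m := by
    rw [hTS, Finset.card_insert_of_notMem hi₁notS, hScard]
    exact hm
  have hm1 : 1 ≤ m := by omega
  have hmN : m ≤ N := by
    have h1 := Finset.card_filter_le (Finset.Icc 1 N)
      (fun l => tilde N α i₁ - (n:ℚ) < tilde N α l)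
    have h2 : (Finset.Icc 1 N).card = N := by simp
    omega
  -- membership characterization via ranks
  have hTiff : ∀ j, 1 ≤ j → j ≤ N →
      (tilde N α i₁ - (n:ℚ) < tilde N α (w j) ↔ j ≤ m) := by
    intro j hj1 hjN
    obtain ⟨hwj1, hwjr⟩ := hw j hj1
    have hwjN := hwN j hj1 hjN
    constructor
    · intro h
      have hsub : ((Finset.Icc 1 N).filter fun x => tilde N α (w j) ≤ tilde N α x)
          ⊆ (Finset.Icc 1 N).filter fun l => tilde N α i₁ - (n:ℚ) < tilde N α l := by
        intro x hx
        simp only [Finset.mem_filter] at hx ⊢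
        exact ⟨hx.1, lt_of_lt_of_le h hx.2⟩
      have hle := Finset.card_le_card hsub
      rw [← rnk_eq_card N α hwj1 hwjN, hwjr, hTcard] at hle
      exact hle
    · intro hjm
      by_contra h
      push_neg at h
      have hlt : tilde N α (w j) < tilde N α i₁ - (n:ℚ) :=
        lt_of_le_of_ne h (hne (w j) hwj1 hwjN)
      have hnotin : w j ∉ (Finset.Icc 1 N).filter fun l =>
          tilde N α i₁ - (n:ℚ) < tilde N α l := by
        simp only [Finset.mem_filter]
        rintro ⟨_, hh⟩
        exact absurd hh (not_lt_of_gt hlt)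
      have hsub : insert (w j) ((Finset.Icc 1 N).filter fun l =>
            tilde N α i₁ - (n:ℚ) < tilde N α l)
          ⊆ (Finset.Icc 1 N).filter fun x => tilde N α (w j) ≤ tilde N α x := by
        intro x hx
        rcases Finset.mem_insert.mp hx with rfl | hx'
        · simp only [Finset.mem_filter, Finset.mem_Icc]
          exact ⟨⟨hwj1, hwjN⟩, le_rfl⟩
        · simp only [Finset.mem_filter] at hx' ⊢
          exact ⟨hx'.1, le_of_lt (lt_trans hlt hx'.2)⟩
      have hle := Finset.card_le_card hsub
      rw [Finset.card_insert_of_notMem hnotin, hTcard,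
        ← rnk_eq_card N α hwj1 hwjN, hwjr] at hle
      omega
  refine ⟨by rw [hScard]; exact hm, (hTiff m hm1 hmN).mpr le_rfl, ?_⟩
  intro j hmj hjN
  have hj1 : 1 ≤ j := by omega
  have h1 : ¬ (tilde N α i₁ - (n:ℚ) < tilde N α (w j)) := by
    intro hh
    have := (hTiff j hj1 hjN).mp hh
    omega
  have h2 := hne (w j) (hw j hj1).1 (hwN j hj1 hjN)
  rcases lt_trichotomy (tilde N α (w j)) (tilde N α i₁ - (n:ℚ)) with h | h | h
  · exact h
  · exact absurd h h2
  · exact absurd h h1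
end

section
/- With the notation of the construction, setting T₀ := Σ_{i=1}^m ⌊α_{w(i)}/n⌋, one has ξ_{m+T₀+1} < −1. Consequently there exists a unique T ≥ 1 such that α̃_{w(m+s)} < ξ_{m+s+1} for 1 ≤ s < T and α̃_{w(m+T)} > ξ_{m+T+1}. -/
lemma rnk_pos (N : ℕ) (α : ℕ → ℕ) (i : ℕ) (hi : 1 ≤ i) : 1 ≤ rnk N α i := by
  unfold rnk
  have hmem : i ∈ (Finset.Icc 1 i).filter (fun j => α j = α i) := by
    simp [Finset.mem_filter, Finset.mem_Icc, hi]
  have := Finset.card_pos.mpr ⟨i, hmem⟩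
  omega

lemma rnk_lt_of_lt (N : ℕ) (α : ℕ → ℕ) (hsupp : ∀ i, N < i → α i = 0)
    (a b : ℕ) (ha : 1 ≤ a) (hab : α a < α b) : rnk N α b < rnk N α a := by
  classical
  have hdisj : Disjoint ((Finset.Icc 1 N).filter fun j => α b < α j)
      ((Finset.Icc 1 b).filter fun j => α j = α b) := by
    rw [Finset.disjoint_left]
    intro j hj1 hj2
    simp only [Finset.mem_filter, Finset.mem_Icc] at hj1 hj2
    omega
  have hsub : ((Finset.Icc 1 N).filter fun j => α b < α j) ∪
      ((Finset.Icc 1 b).filter fun j => α j = α b) ⊆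
      ((Finset.Icc 1 N).filter fun j => α a < α j) := by
    intro j hj
    simp only [Finset.mem_union, Finset.mem_filter, Finset.mem_Icc] at hj ⊢
    rcases hj with ⟨⟨h1, h2⟩, h3⟩ | ⟨⟨h1, h2⟩, h3⟩
    · exact ⟨⟨h1, h2⟩, by omega⟩
    · have hjN : j ≤ N := by
        by_contra hc
        have := hsupp j (by omega)
        omega
      exact ⟨⟨h1, hjN⟩, by omega⟩
  have h1 : ((Finset.Icc 1 N).filter fun j => α b < α j).card +
      ((Finset.Icc 1 b).filter fun j => α j = α b).card ≤
      ((Finset.Icc 1 N).filter fun j => α a < α j).card := by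
    rw [← Finset.card_union_of_disjoint hdisj]
    exact Finset.card_le_card hsub
  have h2 : 1 ≤ ((Finset.Icc 1 a).filter fun j => α j = α a).card := by
    have hmem : a ∈ (Finset.Icc 1 a).filter (fun j => α j = α a) := by
      simp [Finset.mem_filter, Finset.mem_Icc, ha]
    exact Finset.card_pos.mpr ⟨a, hmem⟩
  unfold rnk
  omega

lemma rnk_lt_of_eq (N : ℕ) (α : ℕ → ℕ) (a b : ℕ) (ha : 1 ≤ a) (hab : a < b)
    (heq : α a = α b) : rnk N α a < rnk N α b := by
  classical
  have h1 : ((Finset.Icc 1 N).filter fun j => α a < α j).card =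
      ((Finset.Icc 1 N).filter fun j => α b < α j).card := by
    rw [heq]
  have hdisj : Disjoint ((Finset.Icc 1 a).filter fun j => α j = α a) {b} := by
    rw [Finset.disjoint_left]
    intro j hj1 hj2
    simp only [Finset.mem_filter, Finset.mem_Icc] at hj1
    simp only [Finset.mem_singleton] at hj2
    omega
  have hsub : ((Finset.Icc 1 a).filter fun j => α j = α a) ∪ {b} ⊆
      ((Finset.Icc 1 b).filter fun j => α j = α b) := by
    intro j hj
    simp only [Finset.mem_union, Finset.mem_filter, Finset.mem_Icc,
      Finset.mem_singleton] at hj ⊢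
    rcases hj with ⟨⟨h1, h2⟩, h3⟩ | h
    · exact ⟨⟨h1, by omega⟩, by omega⟩
    · subst h
      exact ⟨⟨by omega, le_rfl⟩, rfl⟩
  have h2 : ((Finset.Icc 1 a).filter fun j => α j = α a).card + 1 ≤
      ((Finset.Icc 1 b).filter fun j => α j = α b).card := by
    have := Finset.card_le_card hsub
    rw [Finset.card_union_of_disjoint hdisj, Finset.card_singleton] at this
    omega
  unfold rnk
  omega

lemma rnk_gt (N : ℕ) (α : ℕ → ℕ) (hsupp : ∀ i, N < i → α i = 0)
    (x : ℕ) (hx : N < x) : N < rnk N α x := by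
  classical
  have hx0 : α x = 0 := hsupp x hx
  have hcards : ((Finset.Icc 1 N).filter fun j => α x < α j).card +
      ((Finset.Icc 1 N).filter fun j => ¬ (α x < α j)).card = N := by
    rw [Finset.card_filter_add_card_filter_not]
    simp
  have hsub : ((Finset.Icc 1 N).filter fun j => ¬ (α x < α j)) ∪ Finset.Icc (N+1) x ⊆
      (Finset.Icc 1 x).filter fun j => α j = α x := by
    intro j hj
    simp only [Finset.mem_union, Finset.mem_filter, Finset.mem_Icc] at hj ⊢
    rcases hj with ⟨⟨h1, h2⟩, h3⟩ | ⟨h1, h2⟩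
    · exact ⟨⟨h1, by omega⟩, by omega⟩
    · exact ⟨⟨by omega, h2⟩, by rw [hsupp j (by omega), hx0]⟩
  have hdisj : Disjoint ((Finset.Icc 1 N).filter fun j => ¬ (α x < α j))
      (Finset.Icc (N+1) x) := by
    rw [Finset.disjoint_left]
    intro j hj1 hj2
    simp only [Finset.mem_filter, Finset.mem_Icc] at hj1 hj2
    omega
  have h2 : ((Finset.Icc 1 N).filter fun j => ¬ (α x < α j)).card + (x - N) ≤
      ((Finset.Icc 1 x).filter fun j => α j = α x).card := by
    have := Finset.card_le_card hsub
    rw [Finset.card_union_of_disjoint hdisj, Nat.card_Icc] at this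
    omega
  unfold rnk
  omega
lemma w_le (N : ℕ) (α : ℕ → ℕ) (w : ℕ → ℕ) (hsupp : ∀ i, N < i → α i = 0)
    (hw : ∀ i, 1 ≤ i → 1 ≤ w i ∧ rnk N α (w i) = i)
    (i : ℕ) (hi1 : 1 ≤ i) (hiN : i ≤ N) : w i ≤ N := by
  by_contra h
  have h2 := rnk_gt N α hsupp (w i) (by omega)
  rw [(hw i hi1).2] at h2
  omega

lemma alpha_w_anti (N : ℕ) (α : ℕ → ℕ) (w : ℕ → ℕ) (hsupp : ∀ i, N < i → α i = 0)
    (hw : ∀ i, 1 ≤ i → 1 ≤ w i ∧ rnk N α (w i) = i)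
    (i j : ℕ) (hi : 1 ≤ i) (hij : i ≤ j) : α (w j) ≤ α (w i) := by
  by_contra h
  push_neg at h
  have h2 := rnk_lt_of_lt N α hsupp (w i) (w j) (hw i hi).1 h
  rw [(hw i hi).2, (hw j (by omega)).2] at h2
  omega

lemma alpha_w1_max (N : ℕ) (α : ℕ → ℕ) (w : ℕ → ℕ) (hsupp : ∀ i, N < i → α i = 0)
    (hw : ∀ i, 1 ≤ i → 1 ≤ w i ∧ rnk N α (w i) = i)
    (b : ℕ) (hb : 1 ≤ b) : α b ≤ α (w 1) := by
  by_contra h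
  push_neg at h
  have h2 := rnk_lt_of_lt N α hsupp (w 1) b (hw 1 le_rfl).1 h
  rw [(hw 1 le_rfl).2] at h2
  have := rnk_pos N α b hb
  omega

lemma alpha_lt_w1 (N : ℕ) (α : ℕ → ℕ) (w : ℕ → ℕ) (hsupp : ∀ i, N < i → α i = 0)
    (hw : ∀ i, 1 ≤ i → 1 ≤ w i ∧ rnk N α (w i) = i)
    (j : ℕ) (hj1 : 1 ≤ j) (hjw : j < w 1) : α j < α (w 1) := by
  have hle := alpha_w1_max N α w hsupp hw j hj1
  rcases eq_or_lt_of_le hle with heq | h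
  · exfalso
    have h2 := rnk_lt_of_eq N α j (w 1) hj1 hjw heq
    rw [(hw 1 le_rfl).2] at h2
    have := rnk_pos N α j hj1
    omega
  · exact h
lemma S_facts (N : ℕ) (α : ℕ → ℕ) (w : ℕ → ℕ) (m n : ℕ)
    (hN : 1 ≤ N)
    (hsupp : ∀ i, N < i → α i = 0)
    (hw : ∀ i, 1 ≤ i → 1 ≤ w i ∧ rnk N α (w i) = i)
    (hn1 : 1 ≤ n) (hn2 : n ≤ α (w 1))
    (hm : leg N α (w 1) (α (w 1) + 1 - n) + 1 = m) :
    m ≤ len N α ∧ ∀ i, 1 ≤ i → i ≤ m → α (w 1) ≤ α (w i) + n := by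
  classical
  unfold leg at hm
  set jc := α (w 1) + 1 - n with hjc
  set A := (Finset.Icc 1 N).filter (fun l => w 1 < l ∧ jc ≤ α l ∧ α l ≤ α (w 1)) with hA
  set B := (Finset.Icc 1 N).filter
    (fun l => l < w 1 ∧ jc ≤ α l + 1 ∧ α l + 1 ≤ α (w 1)) with hB
  set S := (A ∪ B) ∪ {w 1} with hS
  have hw11 : 1 ≤ w 1 := (hw 1 le_rfl).1
  have hw1N : w 1 ≤ N := w_le N α w hsupp hw 1 le_rfl hN
  have hjc1 : 1 ≤ jc := by omega
  have hdAB : Disjoint A B := by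
    rw [Finset.disjoint_left]
    intro l h1 h2
    simp only [hA, hB, Finset.mem_filter, Finset.mem_Icc] at h1 h2
    omega
  have hdS : Disjoint (A ∪ B) ({w 1} : Finset ℕ) := by
    rw [Finset.disjoint_right]
    intro l h1 h2
    simp only [Finset.mem_singleton] at h1
    simp only [Finset.mem_union, hA, hB, Finset.mem_filter, Finset.mem_Icc] at h2
    omega
  have hScard : S.card = m := by
    rw [hS, Finset.card_union_of_disjoint hdS, Finset.card_union_of_disjoint hdAB,
      Finset.card_singleton]
    omega
  -- S is contained in [1, len]
  have hw1len : w 1 ≤ len N α := by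
    have : w 1 ∈ (Finset.Icc 1 N).filter (fun j => α j ≠ 0) := by
      simp only [Finset.mem_filter, Finset.mem_Icc]
      exact ⟨⟨hw11, hw1N⟩, by omega⟩
    exact Finset.le_sup (f := id) this
  have hSlen : S ⊆ Finset.Icc 1 (len N α) := by
    intro l hl
    simp only [hS, Finset.mem_union, Finset.mem_singleton] at hl
    rcases hl with (hl | hl) | hl
    · simp only [hA, Finset.mem_filter, Finset.mem_Icc] at hl
      have : l ∈ (Finset.Icc 1 N).filter (fun j => α j ≠ 0) := by
        simp only [Finset.mem_filter, Finset.mem_Icc]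
        exact ⟨⟨hl.1.1, hl.1.2⟩, by omega⟩
      have := Finset.le_sup (f := id) this
      simp only [Finset.mem_Icc]
      exact ⟨hl.1.1, this⟩
    · simp only [hB, Finset.mem_filter, Finset.mem_Icc] at hl
      simp only [Finset.mem_Icc]
      exact ⟨hl.1.1, by omega⟩
    · subst hl
      simp only [Finset.mem_Icc]
      exact ⟨hw11, hw1len⟩
  have hmlen : m ≤ len N α := by
    have := Finset.card_le_card hSlen
    rw [hScard, Nat.card_Icc] at this
    omega
  refine ⟨hmlen, ?_⟩
  have hm1 : 1 ≤ m := by omega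
  -- every element of S has rank ≤ m
  have hrnkS : ∀ l ∈ S, rnk N α l ≤ m := by
    intro l hl
    simp only [hS, Finset.mem_union, Finset.mem_singleton] at hl
    rcases hl with hl | hl
    · -- l ∈ A ∪ B
      have hlN : 1 ≤ l ∧ l ≤ N := by
        rcases hl with hl | hl <;>
          simp only [hA, hB, Finset.mem_filter, Finset.mem_Icc] at hl <;> exact hl.1
      have hsub : ((Finset.Icc 1 N).filter fun j => α l < α j) ∪
          ((Finset.Icc 1 l).filter fun j => α j = α l) ⊆ S := by
        intro j hj
        simp only [Finset.mem_union, Finset.mem_filter, Finset.mem_Icc] at hj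
        have hj1 : 1 ≤ j := by omega
        have hjN : j ≤ N := by omega
        have hjmax : α j ≤ α (w 1) := alpha_w1_max N α w hsupp hw j hj1
        simp only [hS, Finset.mem_union, Finset.mem_singleton, hA, hB,
          Finset.mem_filter, Finset.mem_Icc]
        rcases lt_trichotomy j (w 1) with hjw | hjw | hjw
        · -- j < w 1 : show j ∈ B
          have hjlt : α j < α (w 1) := alpha_lt_w1 N α w hsupp hw j hj1 hjw
          rcases hl with hl | hl <;>
            simp only [hA, hB, Finset.mem_filter, Finset.mem_Icc] at hl <;>
            rcases hj with ⟨h1, h2⟩ | ⟨h1, h2⟩ <;>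
            exact Or.inl (Or.inr ⟨⟨hj1, hjN⟩, hjw, by omega, by omega⟩)
        · exact Or.inr hjw
        · -- w 1 < j : show j ∈ A
          rcases hl with hl | hl <;>
            simp only [hA, hB, Finset.mem_filter, Finset.mem_Icc] at hl <;>
            rcases hj with ⟨h1, h2⟩ | ⟨h1, h2⟩ <;>
            exact Or.inl (Or.inl ⟨⟨hj1, hjN⟩, hjw, by omega, by omega⟩)
      have hdisj : Disjoint ((Finset.Icc 1 N).filter fun j => α l < α j)
          ((Finset.Icc 1 l).filter fun j => α j = α l) := by
        rw [Finset.disjoint_left]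
        intro j h1 h2
        simp only [Finset.mem_filter, Finset.mem_Icc] at h1 h2
        omega
      have hcard : ((Finset.Icc 1 N).filter fun j => α l < α j).card +
          ((Finset.Icc 1 l).filter fun j => α j = α l).card ≤ S.card := by
        rw [← Finset.card_union_of_disjoint hdisj]
        exact Finset.card_le_card hsub
      unfold rnk
      omega
    · subst hl
      rw [(hw 1 le_rfl).2]
      omega
  -- the set of elements of rank ≤ m has at most m elements
  have hcard2 : ((Finset.Icc 1 N).filter (fun l => rnk N α l ≤ m)).card ≤ m := by
    have hmaps : ∀ a ∈ (Finset.Icc 1 N).filter (fun l => rnk N α l ≤ m),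
        rnk N α a ∈ Finset.Icc 1 m := by
      intro a ha
      simp only [Finset.mem_filter, Finset.mem_Icc] at ha ⊢
      exact ⟨rnk_pos N α a ha.1.1, ha.2⟩
    have hinj : Set.InjOn (rnk N α)
        ((Finset.Icc 1 N).filter (fun l => rnk N α l ≤ m)) := by
      intro a ha b hb hab
      simp only [Finset.coe_filter, Set.mem_setOf_eq, Finset.mem_Icc] at ha hb
      rcases lt_trichotomy (α a) (α b) with h | h | h
      · have := rnk_lt_of_lt N α hsupp a b ha.1.1 h
        omega
      · rcases lt_trichotomy a b with h2 | h2 | h2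
        · have := rnk_lt_of_eq N α a b ha.1.1 h2 h
          omega
        · exact h2
        · have := rnk_lt_of_eq N α b a hb.1.1 h2 h.symm
          omega
      · have := rnk_lt_of_lt N α hsupp b a hb.1.1 h
        omega
    have := Finset.card_le_card_of_injOn (rnk N α) hmaps hinj
    rw [Nat.card_Icc] at this
    omega
  have hSsub2 : S ⊆ (Finset.Icc 1 N).filter (fun l => rnk N α l ≤ m) := by
    intro l hl
    simp only [Finset.mem_filter, Finset.mem_Icc]
    have h2 := hrnkS l hl
    simp only [hS, Finset.mem_union, Finset.mem_singleton] at hl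
    rcases hl with (hl | hl) | hl
    · simp only [hA, Finset.mem_filter, Finset.mem_Icc] at hl
      exact ⟨hl.1, h2⟩
    · simp only [hB, Finset.mem_filter, Finset.mem_Icc] at hl
      exact ⟨hl.1, h2⟩
    · subst hl
      exact ⟨⟨hw11, hw1N⟩, h2⟩
  have hSeq : S = (Finset.Icc 1 N).filter (fun l => rnk N α l ≤ m) :=
    Finset.eq_of_subset_of_card_le hSsub2 (by omega)
  -- conclude
  intro i hi1 him
  have hiN : i ≤ N := by
    have : len N α ≤ N := by
      apply Finset.sup_le
      intro j hj
      simp only [Finset.mem_filter, Finset.mem_Icc] at hj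
      exact hj.1.2
    omega
  have hwi : w i ∈ (Finset.Icc 1 N).filter (fun l => rnk N α l ≤ m) := by
    simp only [Finset.mem_filter, Finset.mem_Icc]
    refine ⟨⟨(hw i hi1).1, w_le N α w hsupp hw i hi1 hiN⟩, ?_⟩
    rw [(hw i hi1).2]
    exact him
  rw [← hSeq] at hwi
  simp only [hS, Finset.mem_union, Finset.mem_singleton] at hwi
  rcases hwi with (hwi | hwi) | hwi
  · simp only [hA, Finset.mem_filter, Finset.mem_Icc] at hwi
    omega
  · simp only [hB, Finset.mem_filter, Finset.mem_Icc] at hwi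
    omega
  · rw [hwi]
    omega
lemma tilde_ne (N : ℕ) (α : ℕ → ℕ) (w : ℕ → ℕ) (n : ℕ)
    (hsupp : ∀ i, N < i → α i = 0)
    (hw : ∀ i, 1 ≤ i → 1 ≤ w i ∧ rnk N α (w i) = i)
    (i j k : ℕ) (hi1 : 1 ≤ i) (hiN : i ≤ N) (hj1 : 1 ≤ j) (hjN : j ≤ N)
    (hij : i ≠ j) :
    tilde N α (w j) ≠ tilde N α (w i) - (n : ℚ) * (k : ℕ) := by
  intro heq
  have hu1 : 1 ≤ w j := (hw j hj1).1
  have huN : w j ≤ N := w_le N α w hsupp hw j hj1 hjN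
  have hv1 : 1 ≤ w i := (hw i hi1).1
  have hvN : w i ≤ N := w_le N α w hsupp hw i hi1 hiN
  have hc : ((N : ℚ) + 1) ≠ 0 := by positivity
  unfold tilde at heq
  have h2 : ((w i : ℚ) - (w j : ℚ)) =
      ((N : ℚ) + 1) * ((α (w i) : ℚ) - (α (w j) : ℚ) - (n : ℚ) * (k : ℚ)) := by
    field_simp at heq
    ring_nf at heq ⊢
    linarith
  have h3 : ((w i : ℤ) - (w j : ℤ)) =
      ((N : ℤ) + 1) * ((α (w i) : ℤ) - (α (w j) : ℤ) - (n : ℤ) * (k : ℤ)) := by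
    exact_mod_cast h2
  have hu1' : (1 : ℤ) ≤ (w j : ℤ) := by exact_mod_cast hu1
  have huN' : (w j : ℤ) ≤ (N : ℤ) := by exact_mod_cast huN
  have hv1' : (1 : ℤ) ≤ (w i : ℤ) := by exact_mod_cast hv1
  have hvN' : (w i : ℤ) ≤ (N : ℤ) := by exact_mod_cast hvN
  have hN1 : (1 : ℤ) ≤ (N : ℤ) := by omega
  set E : ℤ := (α (w i) : ℤ) - (α (w j) : ℤ) - (n : ℤ) * (k : ℤ) with hE
  have hE0 : E = 0 := by
    rcases lt_trichotomy E 0 with h | h | h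
    · exfalso
      have hEle : E ≤ -1 := by omega
      have : ((N : ℤ) + 1) * E ≤ ((N : ℤ) + 1) * (-1) :=
        mul_le_mul_of_nonneg_left hEle (by omega)
      omega
    · exact h
    · exfalso
      have hEge : 1 ≤ E := by omega
      have : ((N : ℤ) + 1) * 1 ≤ ((N : ℤ) + 1) * E :=
        mul_le_mul_of_nonneg_left hEge (by omega)
      omega
  rw [hE0, mul_zero] at h3
  have hvu : w i = w j := by omega
  have hri := (hw i hi1).2
  have hrj := (hw j hj1).2
  rw [hvu] at hri
  omega
/-- with `T₀ = Σ_{i=1}^m ⌊α_{w(i)}/n⌋` one has `ξ_{m+T₀+1} < -1`;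
consequently there is a unique `T ≥ 1` with `α̃_{w(m+s)} < ξ_{m+s+1}` for `1 ≤ s < T`
and `α̃_{w(m+T)} > ξ_{m+T+1}`. -/
theorem exists_unique_T (N : ℕ) (α : ℕ → ℕ) (w : ℕ → ℕ) (m n : ℕ) (ξ : ℕ → ℚ)
    (hN : 1 ≤ N)
    (hNfull : N = len N α + wt N α)
    (hsupp : ∀ i, N < i → α i = 0)
    (hw : ∀ i, 1 ≤ i → 1 ≤ w i ∧ rnk N α (w i) = i)
    (hn1 : 1 ≤ n) (hn2 : n ≤ α (w 1))
    (hm : leg N α (w 1) (α (w 1) + 1 - n) + 1 = m)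
    (hξ : ∀ k i, 1 ≤ i → i ≤ m → ξ (m * k + i) = tilde N α (w i) - (n : ℚ) * k) :
    ξ (m + (∑ i ∈ Finset.Icc 1 m, α (w i) / n) + 1) < -1 ∧
    ∃! T : ℕ, 1 ≤ T ∧
      (∀ s, 1 ≤ s → s < T → tilde N α (w (m + s)) < ξ (m + s + 1)) ∧
      ξ (m + T + 1) < tilde N α (w (m + T)) := by
  classical
  have hm1 : 1 ≤ m := by omega
  obtain ⟨hmlen, hkey⟩ := S_facts N α w m n hN hsupp hw hn1 hn2 hm
  have hlenN : len N α ≤ N := by omega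
  have hmN : m ≤ N := by omega
  set T₀ := ∑ i ∈ Finset.Icc 1 m, α (w i) / n with hT₀def
  have hrm : T₀ % m < m := Nat.mod_lt _ (by omega)
  have hqr := Nat.div_add_mod T₀ m
  set q := T₀ / m with hqdef
  set r := T₀ % m with hrdef
  -- the key floor bound
  have hC : α (w (r + 1)) / n ≤ q := by
    by_contra hcon
    push_neg at hcon
    have hb1 : (r + 1) * (q + 1) ≤ ∑ i ∈ Finset.Ioc 0 (r + 1), α (w i) / n := by
      have hbd : ∀ x ∈ Finset.Ioc 0 (r + 1), q + 1 ≤ α (w x) / n := by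
        intro x hx
        simp only [Finset.mem_Ioc] at hx
        have h1 : α (w (r + 1)) ≤ α (w x) :=
          alpha_w_anti N α w hsupp hw x (r + 1) (by omega) (by omega)
        have h2 := Nat.div_le_div_right (c := n) h1
        omega
      have := Finset.card_nsmul_le_sum (Finset.Ioc 0 (r + 1))
        (fun i => α (w i) / n) (q + 1) hbd
      simpa [Nat.card_Ioc, smul_eq_mul] using this
    have hb2 : (m - (r + 1)) * q ≤ ∑ i ∈ Finset.Ioc (r + 1) m, α (w i) / n := by
      have hbd : ∀ x ∈ Finset.Ioc (r + 1) m, q ≤ α (w x) / n := by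
        intro x hx
        simp only [Finset.mem_Ioc] at hx
        have h1 : α (w 1) ≤ α (w x) + n := hkey x (by omega) (by omega)
        have h2 : α (w 1) / n ≤ (α (w x) + n) / n := Nat.div_le_div_right h1
        rw [Nat.add_div_right _ (by omega)] at h2
        have h3 : α (w (r + 1)) ≤ α (w 1) :=
          alpha_w_anti N α w hsupp hw 1 (r + 1) le_rfl (by omega)
        have h4 := Nat.div_le_div_right (c := n) h3
        omega
      have := Finset.card_nsmul_le_sum (Finset.Ioc (r + 1) m)
        (fun i => α (w i) / n) q hbd
      simpa [Nat.card_Ioc, smul_eq_mul] using this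
    have hsum : (∑ i ∈ Finset.Ioc 0 (r + 1), α (w i) / n) +
        (∑ i ∈ Finset.Ioc (r + 1) m, α (w i) / n) = T₀ := by
      rw [hT₀def, show Finset.Icc 1 m = Finset.Ioc 0 m by
        ext x; simp only [Finset.mem_Ioc, Finset.mem_Icc]; omega]
      exact Finset.sum_Ioc_consecutive _ (by omega) (by omega)
    obtain ⟨d, hd⟩ : ∃ d, m = (r + 1) + d := ⟨m - (r + 1), by omega⟩
    have hd2 : m - (r + 1) = d := by omega
    rw [hd2] at hb2
    have hfin : (r + 1) * (q + 1) + d * q ≤ ((r + 1) + d) * q + r := by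
      calc (r + 1) * (q + 1) + d * q ≤ T₀ := by omega
        _ = m * q + r := by omega
        _ = ((r + 1) + d) * q + r := by rw [← hd]
    nlinarith [hfin]
  -- part 1
  have hidx : m + T₀ + 1 = m * (q + 1) + (r + 1) := by
    have h2 : m * (q + 1) + (r + 1) = (m * q + r) + m + 1 := by ring
    rw [h2, hqr]
    omega
  have hξval := hξ (q + 1) (r + 1) (by omega) (by omega)
  have hwr1 : 1 ≤ w (r + 1) := (hw (r + 1) (by omega)).1
  have hα : α (w (r + 1)) < (q + 1) * n := by
    have := (Nat.div_lt_iff_lt_mul (k := n) (by omega)).1 (show α (w (r+1)) / n < q + 1 by omega)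
    exact this
  have part1 : ξ (m + T₀ + 1) < -1 := by
    rw [hidx, hξval]
    unfold tilde
    have h1 : (0 : ℚ) < (w (r + 1) : ℚ) / ((N : ℚ) + 1) := by positivity
    have h2 : ((α (w (r + 1)) : ℚ)) + 1 ≤ ((q : ℚ) + 1) * (n : ℚ) := by
      have : ((α (w (r + 1)) + 1 : ℕ) : ℚ) ≤ (((q + 1) * n : ℕ) : ℚ) := by
        exact_mod_cast Nat.succ_le_of_lt hα
      push_cast at this
      linarith
    push_cast
    linarith
  refine ⟨part1, ?_⟩
  -- setup for part 2
  have hT₀1 : 1 ≤ T₀ := by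
    have h1 : 1 ≤ α (w 1) / n := (Nat.one_le_div_iff (by omega)).2 hn2
    have h2 : α (w 1) / n ≤ T₀ := by
      rw [hT₀def]
      exact Finset.single_le_sum (f := fun i => α (w i) / n)
        (fun i _ => Nat.zero_le _) (by simp only [Finset.mem_Icc]; omega)
    omega
  have hT₀wt : T₀ ≤ wt N α := by
    have h1 : T₀ ≤ ∑ i ∈ Finset.Icc 1 m, α (w i) := by
      rw [hT₀def]
      exact Finset.sum_le_sum (fun i _ => Nat.div_le_self _ _)
    have hinj : Set.InjOn w (Finset.Icc 1 m) := by
      intro a ha b hb hab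
      simp only [Finset.coe_Icc, Set.mem_Icc] at ha hb
      have h2 := (hw a ha.1).2
      have h3 := (hw b hb.1).2
      rw [hab] at h2
      omega
    have h2 : ∑ i ∈ Finset.Icc 1 m, α (w i) = ∑ j ∈ (Finset.Icc 1 m).image w, α j :=
      (Finset.sum_image (fun a ha b hb hab => hinj ha hb hab)).symm
    have h3 : (Finset.Icc 1 m).image w ⊆ Finset.Icc 1 N := by
      intro j hj
      simp only [Finset.mem_image, Finset.mem_Icc] at hj ⊢
      obtain ⟨a, ha, haj⟩ := hj
      subst haj
      exact ⟨(hw a ha.1).1, w_le N α w hsupp hw a ha.1 (by omega)⟩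
    have h4 : ∑ j ∈ (Finset.Icc 1 m).image w, α j ≤ wt N α :=
      Finset.sum_le_sum_of_subset h3
    omega
  have hmT₀ : m + T₀ ≤ N := by omega
  have htld : ∀ s, 1 ≤ s → s ≤ T₀ → (-1 : ℚ) < tilde N α (w (m + s)) := by
    intro s hs1 hs2
    have hwle : w (m + s) ≤ N := w_le N α w hsupp hw (m + s) (by omega) (by omega)
    unfold tilde
    have h0 : (0 : ℚ) ≤ (α (w (m + s)) : ℚ) := by positivity
    have h1 : ((w (m + s) : ℚ)) ≤ (N : ℚ) := by exact_mod_cast hwle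
    have h2 : ((w (m + s)) : ℚ) / ((N : ℚ) + 1) < 1 := by
      rw [div_lt_one (by positivity)]
      linarith
    linarith
  have hexw : 1 ≤ T₀ ∧ ¬ (tilde N α (w (m + T₀)) < ξ (m + T₀ + 1)) :=
    ⟨hT₀1, not_lt.2 (le_of_lt (by linarith [htld T₀ hT₀1 le_rfl, part1]))⟩
  have hex : ∃ t, 1 ≤ t ∧ ¬ (tilde N α (w (m + t)) < ξ (m + t + 1)) := ⟨T₀, hexw⟩
  obtain ⟨T, hspec, hmin⟩ : ∃ T, (1 ≤ T ∧ ¬ (tilde N α (w (m + T)) < ξ (m + T + 1))) ∧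
      ∀ t, t < T → ¬ (1 ≤ t ∧ ¬ (tilde N α (w (m + t)) < ξ (m + t + 1))) :=
    ⟨Nat.find hex, Nat.find_spec hex, fun t ht => Nat.find_min hex ht⟩
  have hT1 : 1 ≤ T := hspec.1
  have hTle : T ≤ T₀ := by
    by_contra hcon
    exact hmin T₀ (by omega) hexw
  have hPs : ∀ s, 1 ≤ s → s < T → tilde N α (w (m + s)) < ξ (m + s + 1) := by
    intro s hs1 hsT
    have h := hmin s hsT
    push_neg at h
    exact h hs1
  have hrmT : T % m < m := Nat.mod_lt _ (by omega)
  have hidxT : m + T + 1 = m * (T / m + 1) + (T % m + 1) := by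
    have h := Nat.div_add_mod T m
    have h2 : m * (T / m + 1) + (T % m + 1) = (m * (T / m) + T % m) + m + 1 := by ring
    rw [h2, h]
    omega
  have hξT := hξ (T / m + 1) (T % m + 1) (by omega) (by omega)
  have hne : tilde N α (w (m + T)) ≠ ξ (m + T + 1) := by
    rw [hidxT, hξT]
    exact tilde_ne N α w n hsupp hw (T % m + 1) (m + T) (T / m + 1)
      (by omega) (by omega) (by omega) (by omega) (by omega)
  have hξlt : ξ (m + T + 1) < tilde N α (w (m + T)) :=
    lt_of_le_of_ne (not_lt.1 hspec.2) hne.symm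
  refine ⟨T, ⟨hT1, hPs, hξlt⟩, ?_⟩
  rintro y ⟨hy1, hy2, hy3⟩
  rcases lt_trichotomy y T with h | h | h
  · have := hPs y hy1 h
    linarith
  · exact h
  · have := hy2 T hT1 h
    linarith
end

section
/- With β as constructed and the stated rank values of β, for every i ≤ N the polynomial (m·κ + n) divides (r(β,w(i)) − i)·κ + α_{w(i)} − β_{w(i)} in ℚ[κ]; explicitly the quotient is (k+1) for 1 ≤ i ≤ t, k for t < i ≤ m, −1 for m+1 ≤ i ≤ m+T, and 0 for i > m+T. -/
open Polynomial in
/-- `mκ + n` divides `(r(β,w(i)) - i)κ + α_{w(i)} - β_{w(i)}` in `ℚ[κ]`,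
with explicit quotients `k+1`, `k`, `-1`, `0` in the four index ranges. -/
theorem divisibility (N : ℕ) (α β : ℕ → ℕ) (w : ℕ → ℕ) (m n T t k : ℕ)
    (hn : 1 ≤ n) (hm : 1 ≤ m) (ht1 : 1 ≤ t) (htm : t ≤ m) (hT : T = m * k + t)
    (hβ : ∀ i, 1 ≤ i →
      (i ≤ t → (β (w i) : ℤ) = (α (w i) : ℤ) - (k + 1) * n) ∧
      (t < i → i ≤ m → (β (w i) : ℤ) = (α (w i) : ℤ) - k * n) ∧
      (m < i → i ≤ m + T → β (w i) = α (w i) + n) ∧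
      (m + T < i → β (w i) = α (w i)))
    (hr1 : ∀ i, 1 ≤ i → i ≤ T → rnk N β (w (m + i)) = i)
    (hr2 : ∀ i, 1 ≤ i → i ≤ m - t → rnk N β (w (t + i)) = m * k + t + i)
    (hr3 : ∀ i, 1 ≤ i → i ≤ t → rnk N β (w i) = m * (k + 1) + i)
    (hr4 : ∀ i, m + T < i → i ≤ N → rnk N β (w i) = i) :
    ∀ i, 1 ≤ i → i ≤ N →
      (C (m : ℚ) * X + C (n : ℚ)) ∣
        (C ((rnk N β (w i) : ℚ) - (i : ℚ)) * X + C ((α (w i) : ℚ) - (β (w i) : ℚ))) ∧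
      (i ≤ t →
        C ((rnk N β (w i) : ℚ) - (i : ℚ)) * X + C ((α (w i) : ℚ) - (β (w i) : ℚ)) =
          C ((k : ℚ) + 1) * (C (m : ℚ) * X + C (n : ℚ))) ∧
      (t < i → i ≤ m →
        C ((rnk N β (w i) : ℚ) - (i : ℚ)) * X + C ((α (w i) : ℚ) - (β (w i) : ℚ)) =
          C (k : ℚ) * (C (m : ℚ) * X + C (n : ℚ))) ∧
      (m < i → i ≤ m + T →
        C ((rnk N β (w i) : ℚ) - (i : ℚ)) * X + C ((α (w i) : ℚ) - (β (w i) : ℚ)) =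
          -(C (m : ℚ) * X + C (n : ℚ))) ∧
      (m + T < i →
        C ((rnk N β (w i) : ℚ) - (i : ℚ)) * X + C ((α (w i) : ℚ) - (β (w i) : ℚ)) = 0) := by
  intro i h1 hN
  obtain ⟨hb1, hb2, hb3, hb4⟩ := hβ i h1
  by_cases h1t : i ≤ t
  · have hr := hr3 i h1 h1t
    have hb : (β (w i) : ℚ) = (α (w i) : ℚ) - ((k : ℚ) + 1) * (n : ℚ) := by
      exact_mod_cast hb1 h1t
    have heq : C ((rnk N β (w i) : ℚ) - (i : ℚ)) * X + C ((α (w i) : ℚ) - (β (w i) : ℚ)) =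
        C ((k : ℚ) + 1) * (C (m : ℚ) * X + C (n : ℚ)) := by
      have h2 : ((rnk N β (w i) : ℚ) - (i : ℚ)) = ((k : ℚ) + 1) * (m : ℚ) := by
        rw [hr]; push_cast; ring
      have h3 : ((α (w i) : ℚ) - (β (w i) : ℚ)) = ((k : ℚ) + 1) * (n : ℚ) := by
        rw [hb]; ring
      rw [h2, h3, C_mul, C_mul]; ring
    refine ⟨⟨C ((k : ℚ) + 1), by rw [heq]; ring⟩, fun _ => heq, ?_, ?_, ?_⟩
    · intro h _; omega
    · intro h _; omega
    · intro h; omega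
  · by_cases him : i ≤ m
    · have hj1 : 1 ≤ i - t := by omega
      have hj2 : i - t ≤ m - t := by omega
      have hti : t + (i - t) = i := by omega
      have hr := hr2 (i - t) hj1 hj2
      rw [hti] at hr
      have hb : (β (w i) : ℚ) = (α (w i) : ℚ) - (k : ℚ) * (n : ℚ) := by
        exact_mod_cast hb2 (by omega) him
      have heq : C ((rnk N β (w i) : ℚ) - (i : ℚ)) * X + C ((α (w i) : ℚ) - (β (w i) : ℚ)) =
          C (k : ℚ) * (C (m : ℚ) * X + C (n : ℚ)) := by
        have h2 : ((rnk N β (w i) : ℚ) - (i : ℚ)) = (k : ℚ) * (m : ℚ) := by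
          rw [hr]
          have hi : (i : ℚ) = (t : ℚ) + ((i - t : ℕ) : ℚ) := by
            rw [← Nat.cast_add, hti]
          rw [hi]; push_cast; ring
        have h3 : ((α (w i) : ℚ) - (β (w i) : ℚ)) = (k : ℚ) * (n : ℚ) := by
          rw [hb]; ring
        rw [h2, h3, C_mul, C_mul]; ring
      refine ⟨⟨C (k : ℚ), by rw [heq]; ring⟩, fun h => absurd h h1t, fun _ _ => heq, ?_, ?_⟩
      · intro h _; omega
      · intro h; omega
    · by_cases hiT : i ≤ m + T
      · have hj1 : 1 ≤ i - m := by omega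
        have hj2 : i - m ≤ T := by omega
        have hmi : m + (i - m) = i := by omega
        have hr := hr1 (i - m) hj1 hj2
        rw [hmi] at hr
        have hb : (β (w i) : ℚ) = (α (w i) : ℚ) + (n : ℚ) := by
          exact_mod_cast hb3 (by omega) hiT
        have heq : C ((rnk N β (w i) : ℚ) - (i : ℚ)) * X + C ((α (w i) : ℚ) - (β (w i) : ℚ)) =
            -(C (m : ℚ) * X + C (n : ℚ)) := by
          have h2 : ((rnk N β (w i) : ℚ) - (i : ℚ)) = -(m : ℚ) := by
            rw [hr]
            have hi : (i : ℚ) = (m : ℚ) + ((i - m : ℕ) : ℚ) := by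
              rw [← Nat.cast_add, hmi]
            rw [hi]; ring
          have h3 : ((α (w i) : ℚ) - (β (w i) : ℚ)) = -(n : ℚ) := by
            rw [hb]; ring
          rw [h2, h3]
          simp only [map_neg]
          ring
        refine ⟨⟨-1, by rw [heq]; ring⟩, fun h => absurd h h1t, ?_, fun _ _ => heq, ?_⟩
        · intro _ h; omega
        · intro h; omega
      · have hr := hr4 i (by omega) hN
        have hb : (β (w i) : ℚ) = (α (w i) : ℚ) := by
          exact_mod_cast congrArg (Nat.cast : ℕ → ℚ) (hb4 (by omega))
        have heq : C ((rnk N β (w i) : ℚ) - (i : ℚ)) * X + C ((α (w i) : ℚ) - (β (w i) : ℚ)) =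
            0 := by
          rw [hr, hb]; simp
        refine ⟨⟨0, by rw [heq]; ring⟩, fun h => absurd h h1t, ?_, ?_, fun _ => heq⟩
        · intro _ h; omega
        · intro _ h; omega
end

section
/- Define β^(s) := α − n·Σ_{i=1}^s (ε(w((i−1) mod m + 1)) − ε(w(m+i))) for 0 ≤ s ≤ T. Then β^(0) = α, β^(T) = β (the composition of the construction), and β^(s) ▷ β^(s+1) for all 0 ≤ s < T; consequently α ▷ β. -/
/-!
Consecutive terms of the chain differ by an elementary move `γ ↦ γ - n ε(a) + n ε(b)` with
`a = w(s mod m + 1)`, `b = w(m + s + 1)`, `γ_a = α_a - n ⌊s/m⌋` and `γ_b = α_b`. Read through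
the deformation `α̃`, whose entries are pairwise distinct, the choice of `m` and the crossing
conditions on `ξ` give `α̃_b ≤ α̃_a - n (⌊s/m⌋ + 1)`, that is `γ_a - γ_b ≥ n` with equality only
if `a < b`.
If `γ_a - γ_b > n`, the move strictly lowers `γ⁺` in dominance order, since the sum of the `p`
largest parts can only drop. If `γ_a - γ_b = n`, the move swaps `γ_a` and `γ_b`: `γ⁺` is unchanged
and mass moves to the right, so `γ` itself drops. Transitivity of `▷` then gives `α ▷ β`.
All indices stay in `[1, N]` because `m ≤ ℓ(α)` and `T ≤ |α|`.
-/

open Finset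

def countGe (N : ℕ) (γ : ℕ → ℕ) (v : ℕ) : ℕ := #{l ∈ Icc 1 N | v ≤ γ l}

section Rank

variable {N : ℕ} {γ : ℕ → ℕ}

lemma countGe_antitone : Antitone (countGe N γ) := fun _ _ h =>
  card_le_card <| monotone_filter_right _ fun _ _ hl => h.trans hl

lemma countGe_le (v : ℕ) : countGe N γ v ≤ N :=
  (card_filter_le _ _).trans (by simp)

lemma rnk_le_countGe {u : ℕ} (hu : u ∈ Icc 1 N) : rnk N γ u ≤ countGe N γ (γ u) := by
  have hsplit : {l ∈ Icc 1 N | γ u ≤ γ l} =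
      {l ∈ Icc 1 N | γ u < γ l} ∪ {l ∈ Icc 1 N | γ l = γ u} := by
    rw [← filter_or]; exact filter_congr fun l _ => by omega
  have hdisj : Disjoint {l ∈ Icc 1 N | γ u < γ l} {l ∈ Icc 1 N | γ l = γ u} :=
    disjoint_filter.mpr fun _ _ h h' => by omega
  have hsub : {l ∈ Icc 1 u | γ l = γ u} ⊆ {l ∈ Icc 1 N | γ l = γ u} :=
    filter_subset_filter _ (Icc_subset_Icc_right (mem_Icc.mp hu).2)
  rw [countGe, hsplit, card_union_of_disjoint hdisj, rnk]
  exact Nat.add_le_add_left (card_le_card hsub) _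

lemma countGe_lt_rnk {u : ℕ} (hu : u ∈ Icc 1 N) : countGe N γ (γ u + 1) < rnk N γ u := by
  have : 0 < #{l ∈ Icc 1 u | γ l = γ u} := card_pos.mpr ⟨u, by simp [(mem_Icc.mp hu).1]⟩
  unfold rnk countGe
  exact Nat.lt_add_of_pos_right this

lemma rnk_mem_Icc {u : ℕ} (hu : u ∈ Icc 1 N) : rnk N γ u ∈ Icc 1 N :=
  mem_Icc.mpr ⟨(countGe_lt_rnk hu).trans_le' (Nat.zero_le _),
    (rnk_le_countGe hu).trans (countGe_le _)⟩

lemma rnk_lt_rnk_of_lt {u v : ℕ} (hu : u ∈ Icc 1 N) (hv : v ∈ Icc 1 N) (h : γ u < γ v) :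
    rnk N γ v < rnk N γ u :=
  calc rnk N γ v ≤ countGe N γ (γ v) := rnk_le_countGe hv
    _ ≤ countGe N γ (γ u + 1) := countGe_antitone h
    _ < rnk N γ u := countGe_lt_rnk hu

lemma rnk_lt_rnk_of_eq {u v : ℕ} (huv : u < v) (h : γ u = γ v) :
    rnk N γ u < rnk N γ v := by
  have hssub : {l ∈ Icc 1 u | γ l = γ v} ⊂ {l ∈ Icc 1 v | γ l = γ v} := by
    rw [ssubset_iff_of_subset fun l hl => by simp only [mem_filter, mem_Icc] at hl ⊢; omega]
    exact ⟨v, by simp only [mem_filter, mem_Icc, and_true]; omega,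
      by simp only [mem_filter, mem_Icc, and_true, not_and, not_le]; omega⟩
  unfold rnk
  rw [h]
  exact Nat.add_lt_add_left (card_lt_card hssub) _

lemma rnk_injOn : Set.InjOn (rnk N γ) (Icc 1 N) := by
  intro u hu v hv h
  by_contra hne
  rcases lt_trichotomy (γ u) (γ v) with hlt | heq | hgt
  · exact (rnk_lt_rnk_of_lt hu hv hlt).ne h.symm
  · rcases Nat.lt_or_gt_of_ne hne with huv | hvu
    · exact (rnk_lt_rnk_of_eq huv heq).ne h
    · exact (rnk_lt_rnk_of_eq hvu heq.symm).ne h.symm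
  · exact (rnk_lt_rnk_of_lt hv hu hgt).ne h

lemma image_rnk : (Icc 1 N).image (rnk N γ) = Icc 1 N :=
  eq_of_subset_of_card_le (image_subset_iff.mpr fun _ => rnk_mem_Icc)
    (card_image_of_injOn rnk_injOn).ge

lemma exists_rnk_eq {i : ℕ} (hi : i ∈ Icc 1 N) : ∃ u ∈ Icc 1 N, rnk N γ u = i :=
  mem_image.mp (image_rnk.symm ▸ hi)

lemma image_rnk_filter_le {p : ℕ} (hp : p ≤ N) :
    {j ∈ Icc 1 N | rnk N γ j ≤ p}.image (rnk N γ) = Icc 1 p := by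
  rw [← filter_image (p := (· ≤ p)), image_rnk]
  ext i; simp only [mem_filter, mem_Icc]; omega

lemma card_filter_rnk_le {p : ℕ} (hp : p ≤ N) : #{j ∈ Icc 1 N | rnk N γ j ≤ p} = p := by
  rw [← card_image_of_injOn (rnk_injOn.mono (filter_subset _ _)), image_rnk_filter_le hp]
  simp

end Rank

lemma Finset.sum_le_sum_of_card_eq {ι M : Type*} [DecidableEq ι] [AddCommMonoid M]
    [LinearOrder M] [IsOrderedAddMonoid M] {S R : Finset ι} {f : ι → M} (hcard : #S = #R)
    (hle : ∀ x ∈ S \ R, ∀ y ∈ R \ S, f x ≤ f y) : ∑ x ∈ S, f x ≤ ∑ x ∈ R, f x := by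
  have hsdiff : #(S \ R) = #(R \ S) := by
    have := card_sdiff_add_card_inter S R
    have := card_sdiff_add_card_inter R S
    rw [inter_comm] at this
    omega
  rw [← sum_inter_add_sum_sdiff S R, ← sum_inter_add_sum_sdiff R S, inter_comm R S]
  refine add_le_add le_rfl ?_
  obtain hempty | ⟨y₀, hy₀, hmin⟩ := (R \ S).eq_empty_or_nonempty.imp_right
    fun h => exists_min_image (R \ S) f h
  · rw [hempty, card_empty, card_eq_zero] at hsdiff
    simp [hsdiff, hempty]
  · calc ∑ x ∈ S \ R, f x ≤ #(S \ R) • f y₀ := sum_le_card_nsmul _ _ _ fun x hx => hle x hx y₀ hy₀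
      _ = #(R \ S) • f y₀ := by rw [hsdiff]
      _ ≤ ∑ x ∈ R \ S, f x := card_nsmul_le_sum _ _ _ hmin

section Part

variable {N : ℕ} {γ δ : ℕ → ℕ}

lemma part_rnk {u : ℕ} (hu : u ∈ Icc 1 N) : part N γ (rnk N γ u) = γ u := by
  have hfiber : {j ∈ Icc 1 N | rnk N γ j = rnk N γ u} = {u} := by
    ext j
    simp only [mem_filter, mem_singleton]
    exact ⟨fun ⟨hj, h⟩ => rnk_injOn hj hu h, by rintro rfl; exact ⟨hu, rfl⟩⟩
  rw [part, hfiber, sum_singleton]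

lemma card_filter_le_part (v : ℕ) : #{i ∈ Icc 1 N | v ≤ part N γ i} = countGe N γ v := by
  have himage : {u ∈ Icc 1 N | v ≤ γ u}.image (rnk N γ) = {i ∈ Icc 1 N | v ≤ part N γ i} := by
    ext i
    simp only [mem_image, mem_filter]
    constructor
    · rintro ⟨u, ⟨hu, hv⟩, rfl⟩
      exact ⟨rnk_mem_Icc hu, by rwa [part_rnk hu]⟩
    · rintro ⟨hi, hv⟩
      obtain ⟨u, hu, rfl⟩ := exists_rnk_eq (γ := γ) hi
      exact ⟨u, ⟨hu, by rwa [part_rnk hu] at hv⟩, rfl⟩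
  rw [← himage, card_image_of_injOn (rnk_injOn.mono (filter_subset _ _)), countGe]

lemma countGe_eq_of_part_eq (h : ∀ i ∈ Icc 1 N, part N γ i = part N δ i) (v : ℕ) :
    countGe N γ v = countGe N δ v := by
  rw [← card_filter_le_part, ← card_filter_le_part, filter_congr fun i hi => by rw [h i hi]]

lemma part_eq_of_countGe_eq (h : ∀ v, countGe N γ v = countGe N δ v) {i : ℕ}
    (hi : i ∈ Icc 1 N) : part N γ i = part N δ i := by
  obtain ⟨u, hu, rfl⟩ := exists_rnk_eq (γ := γ) hi
  obtain ⟨u', hu', hru'⟩ := exists_rnk_eq (γ := δ) hi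
  rw [part_rnk hu, ← hru', part_rnk hu']
  -- The value `v` of the part of rank `i` is determined by `countGe (v + 1) < i ≤ countGe v`.
  have h₁ := countGe_lt_rnk (γ := γ) hu
  have h₂ := rnk_le_countGe (γ := γ) hu
  have h₃ := countGe_lt_rnk (γ := δ) hu'
  have h₄ := rnk_le_countGe (γ := δ) hu'
  rw [← h] at h₃ h₄
  by_contra hne
  rcases Nat.lt_or_gt_of_ne hne with hlt | hlt
  · have := countGe_antitone (N := N) (γ := γ) (show γ u + 1 ≤ δ u' from hlt); omega
  · have := countGe_antitone (N := N) (γ := γ) (show δ u' + 1 ≤ γ u from hlt); omega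

lemma sum_part_Icc {p : ℕ} (hp : p ≤ N) :
    ∑ i ∈ Icc 1 p, part N γ i = ∑ j ∈ Icc 1 N with rnk N γ j ≤ p, γ j := by
  rw [← image_rnk_filter_le hp, sum_image (rnk_injOn.mono (filter_subset _ _))]
  exact sum_congr rfl fun j hj => part_rnk (mem_filter.mp hj).1

lemma sum_le_sum_part {S : Finset ℕ} (hS : S ⊆ Icc 1 N) :
    ∑ j ∈ S, γ j ≤ ∑ i ∈ Icc 1 #S, part N γ i := by
  have hp : #S ≤ N := by simpa using card_le_card hS
  rw [sum_part_Icc hp]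
  refine sum_le_sum_of_card_eq (card_filter_rnk_le hp).symm fun x hx y hy => ?_
  obtain ⟨hxS, hxR⟩ := mem_sdiff.mp hx
  obtain ⟨hyR, -⟩ := mem_sdiff.mp hy
  rw [mem_filter] at hxR hyR
  by_contra! hlt
  exact hxR ⟨hS hxS, (rnk_lt_rnk_of_lt hyR.1 (hS hxS) hlt).le.trans hyR.2⟩

end Part

section Order

variable {N : ℕ} {f f' g g' h : ℕ → ℕ}

lemma eqOn_of_sum_Icc_eq (hsum : ∀ p ≤ N, ∑ j ∈ Icc 1 p, f j = ∑ j ∈ Icc 1 p, g j) :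
    ∀ i ∈ Icc 1 N, f i = g i := by
  intro i hi
  obtain ⟨hi₁, hiN⟩ := mem_Icc.mp hi
  obtain ⟨p, rfl⟩ := Nat.exists_eq_add_of_le' hi₁
  have h₁ := hsum (p + 1) hiN
  rw [sum_Icc_succ_top (by omega), sum_Icc_succ_top (by omega), hsum p (by omega)] at h₁
  exact Nat.add_left_cancel h₁

lemma sum_Icc_congr (hf : ∀ i ∈ Icc 1 N, f i = f' i) {p : ℕ} (hp : p ≤ N) :
    ∑ j ∈ Icc 1 p, f j = ∑ j ∈ Icc 1 p, f' j :=
  sum_congr rfl fun j hj => hf j (Icc_subset_Icc_right hp hj)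

lemma sdom_trans (h₁ : sdom N f g) (h₂ : sdom N g h) : sdom N f h := by
  obtain ⟨⟨i, hi, hne⟩, hfg⟩ := h₁
  refine ⟨?_, fun p hp => (h₂.2 p hp).trans (hfg p hp)⟩
  by_contra! hfh
  have hgf : ∀ p ≤ N, ∑ j ∈ Icc 1 p, g j = ∑ j ∈ Icc 1 p, f j := fun p hp =>
    le_antisymm (hfg p hp) ((sum_Icc_congr hfh hp).trans_le (h₂.2 p hp))
  exact hne (eqOn_of_sum_Icc_eq hgf i hi).symm

lemma sdom_congr (hf : ∀ i ∈ Icc 1 N, f i = f' i) (hg : ∀ i ∈ Icc 1 N, g i = g' i)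
    (h : sdom N f g) : sdom N f' g' := by
  obtain ⟨⟨i, hi, hne⟩, hs⟩ := h
  refine ⟨⟨i, hi, by rwa [← hf i hi, ← hg i hi]⟩, fun p hp => ?_⟩
  rw [← sum_Icc_congr hf hp, ← sum_Icc_congr hg hp]
  exact hs p hp

lemma rnk_congr_s17 (hf : ∀ i ∈ Icc 1 N, f i = f' i) {i : ℕ} (hi : i ∈ Icc 1 N) :
    rnk N f i = rnk N f' i := by
  have hi' : ∀ j ∈ Icc 1 i, j ∈ Icc 1 N := fun j hj => Icc_subset_Icc_right (mem_Icc.mp hi).2 hj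
  unfold rnk
  congr 1 <;> congr 1 <;> refine filter_congr fun j hj => ?_
  · rw [hf i hi, hf j hj]
  · rw [hf i hi, hf j (hi' j hj)]

lemma part_congr_s17 (hf : ∀ i ∈ Icc 1 N, f i = f' i) (i : ℕ) : part N f i = part N f' i := by
  unfold part
  rw [filter_congr fun j hj => by rw [rnk_congr_s17 hf hj]]
  exact sum_congr rfl fun j hj => hf j (mem_filter.mp hj).1

lemma tri_congr (hf : ∀ i ∈ Icc 1 N, f i = f' i) (hg : ∀ i ∈ Icc 1 N, g i = g' i)
    (h : tri N f g) : tri N f' g' := by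
  obtain ⟨hwt, hcases⟩ := h
  refine ⟨by rwa [wt, wt, ← sum_Icc_congr hf le_rfl, ← sum_Icc_congr hg le_rfl], ?_⟩
  refine hcases.imp (sdom_congr (fun i _ => part_congr_s17 hf i) (fun i _ => part_congr_s17 hg i))
    fun ⟨hpart, hs⟩ => ⟨fun i hi => ?_, sdom_congr hf hg hs⟩
  rw [← part_congr_s17 hf, ← part_congr_s17 hg, hpart i hi]

lemma tri_trans (h₁ : tri N f g) (h₂ : tri N g h) : tri N f h := by
  refine ⟨h₁.1.trans h₂.1, ?_⟩
  rcases h₁.2 with hp₁ | ⟨he₁, hs₁⟩ <;> rcases h₂.2 with hp₂ | ⟨he₂, hs₂⟩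
  · exact Or.inl (sdom_trans hp₁ hp₂)
  · exact Or.inl (sdom_congr (fun _ _ => rfl) he₂ hp₁)
  · exact Or.inl (sdom_congr (fun i hi => (he₁ i hi).symm) (fun _ _ => rfl) hp₂)
  · exact Or.inr ⟨fun i hi => (he₁ i hi).trans (he₂ i hi), sdom_trans hs₁ hs₂⟩

lemma tri_of_chain {B : ℕ → ℕ → ℕ} {T : ℕ} (hT : 1 ≤ T)
    (hstep : ∀ s < T, tri N (B s) (B (s + 1))) : tri N (B 0) (B T) := by
  induction T, hT using Nat.le_induction with
  | base => exact hstep 0 one_pos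
  | succ T hT ih =>
    exact tri_trans (ih fun s hs => hstep s (by omega)) (hstep T (by omega))

end Order

/-- `δ = γ - n ε(a) + n ε(b)`. -/
structure IsMove (γ δ : ℕ → ℕ) (a b n : ℕ) : Prop where
  ne : a ≠ b
  apply_left : δ a + n = γ a
  apply_right : δ b = γ b + n
  apply_of_ne : ∀ l, l ≠ a → l ≠ b → δ l = γ l

namespace IsMove

variable {N : ℕ} {γ δ : ℕ → ℕ} {a b n : ℕ}

lemma sum_add_ite (hm : IsMove γ δ a b n) (S : Finset ℕ) :
    ∑ j ∈ S, δ j + (if a ∈ S then n else 0) = ∑ j ∈ S, γ j + (if b ∈ S then n else 0) := by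
  have hpoint : ∀ j, δ j + (if j = a then n else 0) = γ j + (if j = b then n else 0) := by
    intro j
    rcases eq_or_ne j a with rfl | hja
    · rw [if_pos rfl, if_neg hm.ne, hm.apply_left.symm]; omega
    rcases eq_or_ne j b with rfl | hjb
    · rw [if_neg hja, if_pos rfl, hm.apply_right, add_zero]
    rw [if_neg hja, if_neg hjb, hm.apply_of_ne j hja hjb]
  rw [← sum_ite_eq' S a (fun _ => n), ← sum_ite_eq' S b (fun _ => n), ← sum_add_distrib,
    ← sum_add_distrib]
  exact sum_congr rfl fun j _ => hpoint j

lemma wt_eq (hm : IsMove γ δ a b n) (ha : a ∈ Icc 1 N) (hb : b ∈ Icc 1 N) :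
    wt N γ = wt N δ := by
  have := hm.sum_add_ite (Icc 1 N)
  rw [if_pos ha, if_pos hb] at this
  exact (Nat.add_right_cancel this).symm

lemma sum_Icc_le (hm : IsMove γ δ a b n) (ha : 1 ≤ a) (hab : a < b) (p : ℕ) :
    ∑ j ∈ Icc 1 p, δ j ≤ ∑ j ∈ Icc 1 p, γ j := by
  have := hm.sum_add_ite (Icc 1 p)
  simp only [mem_Icc] at this
  split_ifs at this <;> omega

lemma sum_part_le (hm : IsMove γ δ a b n) (ha : a ∈ Icc 1 N) (hgap : γ b + n ≤ γ a)
    {p : ℕ} (hp : p ≤ N) : ∑ i ∈ Icc 1 p, part N δ i ≤ ∑ i ∈ Icc 1 p, part N γ i := by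
  rw [sum_part_Icc hp]
  set S := {j ∈ Icc 1 N | rnk N δ j ≤ p}
  have hS : S ⊆ Icc 1 N := filter_subset _ _
  have hSp : #S = p := card_filter_rnk_le hp
  have hkey := hm.sum_add_ite S
  by_cases hbS : b ∈ S
  swap
  · rw [if_neg hbS] at hkey
    exact (Nat.le.intro hkey).trans (hSp ▸ sum_le_sum_part hS)
  by_cases haS : a ∈ S
  · rw [if_pos haS, if_pos hbS] at hkey
    exact (Nat.add_right_cancel hkey).le.trans (hSp ▸ sum_le_sum_part hS)
  -- Replacing `b` by `a` in `S` gives a set of the same size on which `γ` is at least as large.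
  rw [if_neg haS, if_pos hbS] at hkey
  have haS' : a ∉ S.erase b := fun h => haS (mem_of_mem_erase h)
  have hS' : insert a (S.erase b) ⊆ Icc 1 N := insert_subset ha ((erase_subset _ _).trans hS)
  have hS'p : #(insert a (S.erase b)) = p := by
    rw [card_insert_of_notMem haS', card_erase_of_mem hbS, ← hSp]
    exact Nat.sub_add_cancel (card_pos.mpr ⟨b, hbS⟩)
  have hsum := sum_le_sum_part (γ := γ) hS'
  rw [hS'p, sum_insert haS'] at hsum
  have := sum_erase_add S γ hbS
  omega

lemma countGe_lt (hm : IsMove γ δ a b n) (ha : a ∈ Icc 1 N) (hn : 0 < n)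
    (hgap : γ b + n < γ a) : countGe N δ (γ a) < countGe N γ (γ a) := by
  have hda := hm.apply_left
  have hdb := hm.apply_right
  have hsub : {l ∈ Icc 1 N | γ a ≤ δ l} ⊆ {l ∈ Icc 1 N | γ a ≤ γ l} := by
    intro l hl
    obtain ⟨hl, hle⟩ := mem_filter.mp hl
    have hla : l ≠ a := by rintro rfl; omega
    have hlb : l ≠ b := by rintro rfl; omega
    exact mem_filter.mpr ⟨hl, hm.apply_of_ne l hla hlb ▸ hle⟩
  refine card_lt_card ((ssubset_iff_of_subset hsub).mpr ⟨a, ?_, ?_⟩)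
  · simp [ha]
  · simp only [mem_filter, not_and]
    omega

lemma apply_eq_swap (hm : IsMove γ δ a b n) (hgap : γ b + n = γ a) (l : ℕ) :
    δ l = γ (Equiv.swap a b l) := by
  rcases eq_or_ne l a with rfl | hla
  · rw [Equiv.swap_apply_left]; have := hm.apply_left; omega
  rcases eq_or_ne l b with rfl | hlb
  · rw [Equiv.swap_apply_right]; have := hm.apply_right; omega
  rw [Equiv.swap_apply_of_ne_of_ne hla hlb, hm.apply_of_ne l hla hlb]

lemma countGe_eq_of_swap (hm : IsMove γ δ a b n) (ha : a ∈ Icc 1 N) (hb : b ∈ Icc 1 N)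
    (hgap : γ b + n = γ a) (v : ℕ) : countGe N δ v = countGe N γ v := by
  have hmaps : ∀ l ∈ Icc 1 N, Equiv.swap a b l ∈ Icc 1 N := fun l hl => by
    rcases eq_or_ne l a with rfl | hla
    · rwa [Equiv.swap_apply_left]
    rcases eq_or_ne l b with rfl | hlb
    · rwa [Equiv.swap_apply_right]
    rwa [Equiv.swap_apply_of_ne_of_ne hla hlb]
  refine card_nbij' (Equiv.swap a b) (Equiv.swap a b) (fun l hl => ?_) (fun l hl => ?_)
    (fun l _ => Equiv.swap_apply_self _ _ _) (fun l _ => Equiv.swap_apply_self _ _ _)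
  · simp only [mem_coe, mem_filter] at hl ⊢
    exact ⟨hmaps l hl.1, hm.apply_eq_swap hgap l ▸ hl.2⟩
  · simp only [mem_coe, mem_filter] at hl ⊢
    exact ⟨hmaps l hl.1, by rw [hm.apply_eq_swap hgap, Equiv.swap_apply_self]; exact hl.2⟩

lemma tri (hm : IsMove γ δ a b n) (ha : a ∈ Icc 1 N) (hb : b ∈ Icc 1 N) (hn : 1 ≤ n)
    (hgap : γ b + n < γ a ∨ γ b + n = γ a ∧ a < b) : tri N γ δ := by
  refine ⟨hm.wt_eq ha hb, ?_⟩
  rcases hgap with hlt | ⟨heq, hab⟩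
  · refine Or.inl ⟨?_, fun p hp => hm.sum_part_le ha hlt.le hp⟩
    by_contra! hpart
    exact (hm.countGe_lt ha hn hlt).ne (countGe_eq_of_part_eq hpart _).symm
  · refine Or.inr ⟨fun i hi => part_eq_of_countGe_eq
      (fun v => (hm.countGe_eq_of_swap ha hb heq v).symm) hi, ⟨a, ha, ?_⟩,
      fun p _ => hm.sum_Icc_le (mem_Icc.mp ha).1 hab p⟩
    have := hm.apply_left
    omega

end IsMove

section Tilde

variable {N : ℕ} {γ : ℕ → ℕ}

lemma tilde_le_tilde_sub_iff {x y : ℕ} (hx : x ∈ Icc 1 N) (hy : y ∈ Icc 1 N) (ν : ℕ) :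
    tilde N γ y ≤ tilde N γ x - ν ↔ γ y + ν < γ x ∨ γ y + ν = γ x ∧ x ≤ y := by
  obtain ⟨hx₁, hxN⟩ := mem_Icc.mp hx
  obtain ⟨hy₁, hyN⟩ := mem_Icc.mp hy
  have hD : (0 : ℚ) < N + 1 := by positivity
  -- Clearing the denominator `N + 1`, which exceeds `|x - y|`.
  have hcleared : tilde N γ y ≤ tilde N γ x - ν ↔
      ((γ y : ℤ) + ν - γ x) * (N + 1) ≤ (y : ℤ) - x := by
    have hdiff : tilde N γ x - ν - tilde N γ y =
        (((y : ℤ) - x - ((γ y : ℤ) + ν - γ x) * (N + 1) : ℤ) : ℚ) / (N + 1) := by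
      unfold tilde; push_cast; field_simp; ring
    rw [← sub_nonneg, hdiff, le_div_iff₀ hD, zero_mul, Int.cast_nonneg_iff, sub_nonneg]
  rw [hcleared]
  rcases lt_trichotomy ((γ y : ℤ) + ν) (γ x) with hlt | heq | hgt
  · have : ((γ y : ℤ) + ν - γ x) * (N + 1) ≤ -(N + 1) := by nlinarith
    constructor <;> intro <;> omega
  · rw [heq, sub_self, zero_mul]
    constructor <;> intro <;> omega
  · have : (N + 1 : ℤ) ≤ ((γ y : ℤ) + ν - γ x) * (N + 1) := by nlinarith
    constructor <;> intro <;> omega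

lemma tilde_le_tilde_of_rnk_le {x y : ℕ} (hx : x ∈ Icc 1 N) (hy : y ∈ Icc 1 N)
    (h : rnk N γ x ≤ rnk N γ y) : tilde N γ y ≤ tilde N γ x := by
  have := tilde_le_tilde_sub_iff (γ := γ) hx hy 0
  rw [Nat.cast_zero, sub_zero, add_zero] at this
  rw [this]
  by_contra! hne
  obtain ⟨hle, htie⟩ := hne
  rcases hle.lt_or_eq with hlt | heq
  · exact (rnk_lt_rnk_of_lt hx hy hlt).not_ge h
  · exact (rnk_lt_rnk_of_eq (htie heq.symm) heq.symm).not_ge h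

end Tilde

section Leg

variable {N : ℕ} {γ : ℕ → ℕ} {x n : ℕ}

lemma card_filter_tilde_gt (hx : x ∈ Icc 1 N) (hmax : ∀ l ∈ Icc 1 N, tilde N γ l ≤ tilde N γ x)
    (hn : 0 < n) :
    #{l ∈ Icc 1 N | tilde N γ x - n < tilde N γ l} = leg N γ x (γ x + 1 - n) + 1 := by
  have hchar : ∀ l ∈ Icc 1 N, tilde N γ x - n < tilde N γ l ↔ l = x ∨
      (x < l ∧ γ x + 1 - n ≤ γ l ∧ γ l ≤ γ x) ∨
      (l < x ∧ γ x + 1 - n ≤ γ l + 1 ∧ γ l + 1 ≤ γ x) := by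
    intro l hl
    have hle := (tilde_le_tilde_sub_iff hx hl 0).mp (by simpa using hmax l hl)
    rw [← not_le, tilde_le_tilde_sub_iff hx hl]
    rcases eq_or_ne l x with rfl | _ <;> omega
  rw [filter_congr hchar, filter_or, filter_or, filter_eq' (Icc 1 N) x, if_pos hx,
    card_union_of_disjoint, card_union_of_disjoint, leg, card_singleton]
  · omega
  · exact disjoint_filter.mpr fun _ _ h h' => by omega
  · exact disjoint_singleton_left.mpr fun h => by simp at h

lemma card_filter_tilde_gt_le_len (hx : x ∈ Icc 1 N) (hx₀ : γ x ≠ 0) (hnx : n ≤ γ x) :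
    #{l ∈ Icc 1 N | tilde N γ x - n < tilde N γ l} ≤ len N γ := by
  have hlen : ∀ l ∈ Icc 1 N, γ l ≠ 0 → l ≤ len N γ := fun l hl h =>
    le_sup (f := id) (mem_filter.mpr ⟨hl, h⟩)
  have hsub : {l ∈ Icc 1 N | tilde N γ x - n < tilde N γ l} ⊆ Icc 1 (len N γ) := by
    intro l hl
    obtain ⟨hl, hgt⟩ := mem_filter.mp hl
    refine mem_Icc.mpr ⟨(mem_Icc.mp hl).1, ?_⟩
    by_cases hl₀ : γ l = 0
    · rw [← not_le, tilde_le_tilde_sub_iff hx hl] at hgt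
      exact (show l ≤ x by omega).trans (hlen x hx hx₀)
    · exact hlen l hl hl₀
  simpa using card_le_card hsub

end Leg

lemma card_filter_Icc_succ (p : ℕ → Prop) [DecidablePred p] (s : ℕ) :
    #{i ∈ Icc 1 (s + 1) | p i} = #{i ∈ Icc 1 s | p i} + if p (s + 1) then 1 else 0 := by
  rw [← insert_Icc_right_eq_Icc_add_one (by omega), filter_insert]
  split_ifs
  · exact card_insert_of_notMem (by simp)
  · rfl

lemma card_filter_sub_one_mod_add_one_eq {m j : ℕ} (hj : j ∈ Icc 1 m) (q : ℕ) {r : ℕ}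
    (hr : r ≤ m) : #{i ∈ Icc 1 (m * q + r) | (i - 1) % m + 1 = j} = q + if j ≤ r then 1 else 0 := by
  obtain ⟨hj₁, hjm⟩ := mem_Icc.mp hj
  have hm : 0 < m := by omega
  have hjmod : (j - 1) % m = j - 1 := Nat.mod_eq_of_lt (by omega)
  have hshift : #{i ∈ Icc 1 (m * q + r) | (i - 1) % m + 1 = j} =
      Nat.count (· ≡ j - 1 [MOD m]) (m * q + r) := by
    rw [Nat.count_eq_card_filter_range]
    refine card_nbij' (· - 1) (· + 1) (fun i hi => ?_) (fun i hi => ?_)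
      (fun i hi => ?_) (fun i _ => by simp)
    · simp only [mem_coe, mem_filter, mem_Icc, mem_range, Nat.ModEq, hjmod] at hi ⊢
      omega
    · simp only [mem_coe, mem_filter, mem_Icc, mem_range, Nat.ModEq, hjmod,
        Nat.add_sub_cancel] at hi ⊢
      omega
    · simp only [mem_coe, mem_filter, mem_Icc] at hi
      exact Nat.sub_add_cancel hi.1.1
  rw [hshift, Nat.count_modEq_card _ hm, hjmod]
  rcases hr.lt_or_eq with hr | rfl
  · rw [Nat.mul_add_div hm, Nat.div_eq_of_lt hr, Nat.mul_add_mod, Nat.mod_eq_of_lt hr]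
    simp only [add_zero]
    congr 1
    exact if_congr (by omega) rfl rfl
  · rw [← Nat.mul_add_one, Nat.mul_div_cancel_left _ hm, Nat.mul_mod_right, if_pos hjm,
      if_neg (Nat.not_lt_zero _)]

section Chain

variable {α w : ℕ → ℕ} {m n : ℕ}

/-- `β⁽ˢ⁾`, with values in `ℤ`. -/
def chainVec (α w : ℕ → ℕ) (m n s l : ℕ) : ℤ :=
  (α l : ℤ) - (n : ℤ) * ((#{i ∈ Icc 1 s | w ((i - 1) % m + 1) = l} : ℤ) -
    (#{i ∈ Icc 1 s | w (m + i) = l} : ℤ))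

lemma chainVec_zero (l : ℕ) : chainVec α w m n 0 l = α l := by
  simp [chainVec]

lemma chainVec_succ (s l : ℕ) : chainVec α w m n (s + 1) l = chainVec α w m n s l -
    n * ((if w (s % m + 1) = l then 1 else 0) - (if w (m + s + 1) = l then 1 else 0)) := by
  simp only [chainVec, card_filter_Icc_succ, Nat.add_sub_cancel, ← add_assoc]
  push_cast
  ring

lemma chainVec_apply_of_le (hw : Set.InjOn w (Set.Ici 1)) {j : ℕ} (hj : j ∈ Icc 1 m)
    (q : ℕ) {r : ℕ} (hr : r ≤ m) :
    chainVec α w m n (m * q + r) (w j) = α (w j) - n * (q + if j ≤ r then 1 else 0) := by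
  have hj₁ : 1 ≤ j := (mem_Icc.mp hj).1
  have hleft : #{i ∈ Icc 1 (m * q + r) | w ((i - 1) % m + 1) = w j} =
      #{i ∈ Icc 1 (m * q + r) | (i - 1) % m + 1 = j} :=
    congrArg card <| filter_congr fun i _ =>
      hw.eq_iff (Set.mem_Ici.mpr (Nat.le_add_left 1 _)) (Set.mem_Ici.mpr hj₁)
  have hright : #{i ∈ Icc 1 (m * q + r) | w (m + i) = w j} = 0 := by
    refine card_eq_zero.mpr (filter_eq_empty_iff.mpr fun i hi h => ?_)
    have hi₁ := (mem_Icc.mp hi).1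
    have := hw (Set.mem_Ici.mpr (by omega : 1 ≤ m + i)) (Set.mem_Ici.mpr hj₁) h
    have := (mem_Icc.mp hj).2
    omega
  rw [chainVec, hleft, hright, card_filter_sub_one_mod_add_one_eq hj q hr]
  push_cast
  ring

lemma chainVec_apply_of_gt (hw : Set.InjOn w (Set.Ici 1)) (hm : 0 < m) {j : ℕ} (hj : m < j)
    (s : ℕ) : chainVec α w m n s (w j) = α (w j) + n * (if j ≤ m + s then 1 else 0) := by
  have hj₁ : j ∈ Set.Ici 1 := Set.mem_Ici.mpr (by omega)
  have hleft : #{i ∈ Icc 1 s | w ((i - 1) % m + 1) = w j} = 0 := by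
    refine card_eq_zero.mpr (filter_eq_empty_iff.mpr fun i _ h => ?_)
    have := hw (Set.mem_Ici.mpr (Nat.le_add_left 1 _)) hj₁ h
    have := Nat.mod_lt (i - 1) hm
    omega
  have hright : {i ∈ Icc 1 s | w (m + i) = w j} = if j ≤ m + s then {j - m} else ∅ := by
    ext i
    simp only [mem_filter, mem_Icc, hw.eq_iff (Set.mem_Ici.mpr (by omega : 1 ≤ m + i)) hj₁]
    split_ifs
    · simp only [mem_singleton]; omega
    · simp only [notMem_empty, iff_false, not_and, and_imp]; omega
  rw [chainVec, hleft, hright]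
  split_ifs <;> simp

lemma isMove_of_chainVec {γ δ : ℕ → ℕ} {s : ℕ} (hγ : ∀ l, (γ l : ℤ) = chainVec α w m n s l)
    (hδ : ∀ l, (δ l : ℤ) = chainVec α w m n (s + 1) l) (hne : w (s % m + 1) ≠ w (m + s + 1)) :
    IsMove γ δ (w (s % m + 1)) (w (m + s + 1)) n := by
  have hstep : ∀ l, (δ l : ℤ) = γ l -
      n * ((if w (s % m + 1) = l then 1 else 0) - (if w (m + s + 1) = l then 1 else 0)) :=
    fun l => by rw [hδ, hγ, chainVec_succ]
  refine ⟨hne, ?_, ?_, fun l hla hlb => ?_⟩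
  · have := hstep (w (s % m + 1))
    rw [if_pos rfl, if_neg hne.symm] at this
    omega
  · have := hstep (w (m + s + 1))
    rw [if_neg hne, if_pos rfl] at this
    omega
  · have := hstep l
    rw [if_neg (Ne.symm hla), if_neg (Ne.symm hlb)] at this
    omega

end Chain

lemma eq_mul_add_of_eq_sub_one_mod {T m t k : ℕ} (hm : 0 < m) (hT : 1 ≤ T)
    (ht : t = (T - 1) % m + 1) (hk : k = (T - t) / m) : T = m * k + t ∧ 1 ≤ t ∧ t ≤ m := by
  have hdiv := Nat.div_add_mod (T - 1) m
  have hmod := Nat.mod_lt (T - 1) hm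
  have hTt : T - t = m * ((T - 1) / m) := by omega
  rw [hTt, Nat.mul_div_cancel_left _ hm] at hk
  subst hk
  omega

lemma le_of_card_filter_lt {β : Type*} [LinearOrder β] {S : Finset ℕ} {f : ℕ → β}
    {w : ℕ → ℕ} {c : β} {j : ℕ} (hw : Set.InjOn w (Icc 1 j)) (hmem : ∀ i ∈ Icc 1 j, w i ∈ S)
    (hanti : ∀ i ∈ Icc 1 j, f (w j) ≤ f (w i)) (hcard : #{l ∈ S | c < f l} < j) :
    f (w j) ≤ c := by
  by_contra! hlt
  have hsub : (Icc 1 j).image w ⊆ {l ∈ S | c < f l} := image_subset_iff.mpr fun i hi =>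
    mem_filter.mpr ⟨hmem i hi, hlt.trans_le (hanti i hi)⟩
  have := card_le_card hsub
  rw [card_image_of_injOn hw, Nat.card_Icc, Nat.add_sub_cancel] at this
  omega

section Sorting

variable {N : ℕ} {γ : ℕ → ℕ}

lemma lt_rnk_of_lt (hsupp : ∀ i, N < i → γ i = 0) {x : ℕ} (hx : N < x) : N < rnk N γ x := by
  have hx₀ := hsupp x hx
  have hsplit := card_filter_add_card_filter_not (s := Icc 1 N) (fun j => γ x < γ j)
  rw [filter_congr fun j _ => show ¬γ x < γ j ↔ γ j = γ x by omega, Nat.card_Icc] at hsplit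
  have hsub : insert x {j ∈ Icc 1 N | γ j = γ x} ⊆ {j ∈ Icc 1 x | γ j = γ x} :=
    insert_subset (by simp only [mem_filter, mem_Icc, and_true]; omega)
      (filter_subset_filter _ (Icc_subset_Icc_right hx.le))
  have := card_le_card hsub
  rw [card_insert_of_notMem (by simp only [mem_filter, mem_Icc, not_and]; omega)] at this
  unfold rnk
  omega

lemma mem_Icc_of_rnk_eq (hsupp : ∀ i, N < i → γ i = 0) {x i : ℕ} (hx : 1 ≤ x)
    (hrnk : rnk N γ x = i) (hi : i ≤ N) : x ∈ Icc 1 N := by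
  refine mem_Icc.mpr ⟨hx, ?_⟩
  by_contra! hNx
  have := lt_rnk_of_lt hsupp hNx
  omega

end Sorting

section Weight

variable {N m k t n : ℕ} {α β w : ℕ → ℕ}

/-- As `β` is `ℕ`-valued, `α_{w(i)} ≥ (k + 1) n` for `i ≤ t` and `α_{w(i)} ≥ k n` for
`t < i ≤ m`. -/
lemma mul_add_le_wt (hw : Set.InjOn w (Icc 1 m)) (hmem : ∀ i ∈ Icc 1 m, w i ∈ Icc 1 N)
    (hn : 0 < n) (htm : t ≤ m)
    (hβ₁ : ∀ i, 1 ≤ i → i ≤ t → (β (w i) : ℤ) = α (w i) - (k + 1) * n)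
    (hβ₂ : ∀ i, t < i → i ≤ m → (β (w i) : ℤ) = α (w i) - k * n) :
    m * k + t ≤ wt N α := by
  have hn' : (1 : ℤ) ≤ n := by exact_mod_cast hn
  have hle : ∀ i ∈ Icc 1 m, k + (if i ≤ t then 1 else 0) ≤ α (w i) := by
    intro i hi
    obtain ⟨hi₁, him⟩ := mem_Icc.mp hi
    split_ifs with hit
    · have := hβ₁ i hi₁ hit
      have : (k + 1 : ℤ) ≤ (k + 1) * n := le_mul_of_one_le_right (by positivity) hn'
      omega
    · have := hβ₂ i (by omega) him
      have : (k : ℤ) ≤ k * n := le_mul_of_one_le_right (by positivity) hn'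
      omega
  have hcount : ∑ i ∈ Icc 1 m, (if i ≤ t then 1 else 0) = t := by
    rw [sum_boole, Nat.cast_id, filter_congr fun i hi => show i ≤ t ↔ i ∈ Icc 1 t by
      simp only [mem_Icc] at hi ⊢; omega, filter_mem_eq_inter,
      inter_eq_right.mpr (Icc_subset_Icc_right htm), Nat.card_Icc, Nat.add_sub_cancel]
  calc m * k + t = ∑ i ∈ Icc 1 m, (k + if i ≤ t then 1 else 0) := by
        rw [sum_add_distrib, hcount, sum_const, Nat.card_Icc, Nat.add_sub_cancel, smul_eq_mul]
    _ ≤ ∑ i ∈ Icc 1 m, α (w i) := sum_le_sum hle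
    _ = ∑ l ∈ (Icc 1 m).image w, α l := (sum_image hw).symm
    _ ≤ wt N α := sum_le_sum_of_subset (image_subset_iff.mpr hmem)

end Weight

section Step

variable {N m n : ℕ} {α β w : ℕ → ℕ}

lemma tri_of_chainVec (hw : Set.InjOn w (Set.Ici 1)) (hwmem : ∀ i ∈ Icc 1 N, w i ∈ Icc 1 N)
    (hm : 0 < m) (hn : 0 < n) {s : ℕ} (hsN : m + s + 1 ≤ N) {γ δ : ℕ → ℕ}
    (hγ : ∀ l, (γ l : ℤ) = chainVec α w m n s l)
    (hδ : ∀ l, (δ l : ℤ) = chainVec α w m n (s + 1) l)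
    (htilde : tilde N α (w (m + s + 1)) ≤ tilde N α (w (s % m + 1)) - (n * (s / m + 1) : ℕ)) :
    tri N γ δ := by
  have hsm : s % m < m := Nat.mod_lt s hm
  have ha := hwmem (s % m + 1) (mem_Icc.mpr ⟨Nat.le_add_left 1 _, by omega⟩)
  have hb := hwmem (m + s + 1) (mem_Icc.mpr ⟨Nat.le_add_left 1 _, hsN⟩)
  have hne : w (s % m + 1) ≠ w (m + s + 1) := fun h => by
    have := hw (Set.mem_Ici.mpr (Nat.le_add_left 1 _)) (Set.mem_Ici.mpr (Nat.le_add_left 1 _)) h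
    omega
  have hγa : γ (w (s % m + 1)) + n * (s / m) = α (w (s % m + 1)) := by
    have := chainVec_apply_of_le (α := α) (n := n) hw (mem_Icc.mpr ⟨Nat.le_add_left 1 _, hsm⟩)
      (s / m) hsm.le
    rw [Nat.div_add_mod, if_neg (by omega), add_zero, ← hγ] at this
    omega
  have hγb : γ (w (m + s + 1)) = α (w (m + s + 1)) := by
    have := hγ (w (m + s + 1))
    rw [chainVec_apply_of_gt hw hm (by omega), if_neg (by omega)] at this
    omega
  refine (isMove_of_chainVec hγ hδ hne).tri ha hb hn ?_
  rw [tilde_le_tilde_sub_iff ha hb, Nat.mul_add_one] at htilde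
  omega

/-- For `s = 0` the bound holds because exactly `m` entries of `α̃` exceed `α̃_{w(1)} - n`; for
`s > 0` it is the crossing condition at `s`. -/
lemma tilde_le_tilde_sub_of_crossing {T : ℕ} {ξ : ℕ → ℚ} (hm : 0 < m) (hmT : m + T ≤ N)
    (hwmem : ∀ i ∈ Icc 1 N, w i ∈ Icc 1 N) (hwrnk : ∀ i, 1 ≤ i → rnk N α (w i) = i)
    (hS : #{l ∈ Icc 1 N | tilde N α (w 1) - n < tilde N α l} = m)
    (hξ : ∀ k i, 1 ≤ i → i ≤ m → ξ (m * k + i) = tilde N α (w i) - (n : ℚ) * k)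
    (hT : ∀ s, 1 ≤ s → s < T → tilde N α (w (m + s)) < ξ (m + s + 1)) {s : ℕ} (hs : s < T) :
    tilde N α (w (m + s + 1)) ≤ tilde N α (w (s % m + 1)) - (n * (s / m + 1) : ℕ) := by
  have hanti : ∀ i j, 1 ≤ i → i ≤ j → j ≤ N → tilde N α (w j) ≤ tilde N α (w i) :=
    fun i j hi hij hj => tilde_le_tilde_of_rnk_le (hwmem i (mem_Icc.mpr ⟨hi, hij.trans hj⟩))
      (hwmem j (mem_Icc.mpr ⟨hi.trans hij, hj⟩))
      (by rw [hwrnk i hi, hwrnk j (hi.trans hij)]; exact hij)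
  have hξs := hξ (s / m + 1) (s % m + 1) (Nat.le_add_left 1 _) (Nat.mod_lt s hm)
  rw [show m * (s / m + 1) + (s % m + 1) = m + s + 1 by
    rw [Nat.mul_add_one]; have := Nat.div_add_mod s m; omega] at hξs
  rw [Nat.cast_add_one] at hξs
  rw [Nat.cast_mul, Nat.cast_add_one, ← hξs]
  rcases Nat.eq_zero_or_pos s with rfl | hs₁
  · rw [hξs, Nat.zero_mod, Nat.zero_div, Nat.cast_zero, zero_add, zero_add, mul_one, add_zero]
    refine le_of_card_filter_lt (fun i hi j hj h => ?_) (fun i hi => hwmem i ?_)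
      (fun i hi => hanti i _ (mem_Icc.mp hi).1 (mem_Icc.mp hi).2 (by omega)) (by omega)
    · rw [← hwrnk i (mem_Icc.mp hi).1, ← hwrnk j (mem_Icc.mp hj).1, h]
    · exact Icc_subset_Icc_right (by omega) hi
  · exact (hanti _ _ (by omega) (Nat.le_succ _) (by omega)).trans (hT s hs₁ hs).le

lemma eqOn_of_chainVec_end {γ : ℕ → ℕ} {T t k : ℕ} (hw : Set.InjOn w (Set.Ici 1))
    (hwmem : ∀ i ∈ Icc 1 N, w i ∈ Icc 1 N) (hwrnk : ∀ i, 1 ≤ i → rnk N α (w i) = i)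
    (hm : 0 < m) (hT : T = m * k + t) (htm : t ≤ m)
    (hβ : ∀ i, 1 ≤ i →
      (i ≤ t → (β (w i) : ℤ) = (α (w i) : ℤ) - (k + 1) * n) ∧
      (t < i → i ≤ m → (β (w i) : ℤ) = (α (w i) : ℤ) - k * n) ∧
      (m < i → i ≤ m + T → β (w i) = α (w i) + n) ∧
      (m + T < i → β (w i) = α (w i)))
    (hγ : ∀ l, (γ l : ℤ) = chainVec α w m n T l) : ∀ l ∈ Icc 1 N, γ l = β l := by
  intro l hl
  have hj := rnk_mem_Icc (γ := α) hl
  rw [← rnk_injOn (hwmem _ hj) hl (hwrnk _ (mem_Icc.mp hj).1)]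
  set j := rnk N α l
  obtain ⟨hβ₁, hβ₂, hβ₃, hβ₄⟩ := hβ j (mem_Icc.mp hj).1
  have := hγ (w j)
  rcases le_or_gt j m with hjm | hjm
  · rw [hT, chainVec_apply_of_le hw (mem_Icc.mpr ⟨(mem_Icc.mp hj).1, hjm⟩) k htm] at this
    split_ifs at this with hjt
    · have := hβ₁ hjt; linarith
    · have := hβ₂ (by omega) hjm; linarith
  · rw [chainVec_apply_of_gt hw hm hjm] at this
    split_ifs at this with hjT
    · have := hβ₃ hjm hjT; omega
    · have := hβ₄ (by omega); omega

end Step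

theorem chain_dominance_general (N : ℕ) (α β : ℕ → ℕ) (w : ℕ → ℕ) (m n T t k : ℕ)
    (B : ℕ → ℕ → ℕ) (ξ : ℕ → ℚ)
    (hN : 1 ≤ N)
    (hNfull : N = len N α + wt N α)
    (hsupp : ∀ i, N < i → α i = 0)
    (hw : ∀ i, 1 ≤ i → 1 ≤ w i ∧ rnk N α (w i) = i)
    (hn1 : 1 ≤ n) (hn2 : n ≤ α (w 1))
    (hm : leg N α (w 1) (α (w 1) + 1 - n) + 1 = m)
    (hξ : ∀ k i, 1 ≤ i → i ≤ m → ξ (m * k + i) = tilde N α (w i) - (n : ℚ) * k)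
    (hT1 : 1 ≤ T)
    (hT2 : ∀ s, 1 ≤ s → s < T → tilde N α (w (m + s)) < ξ (m + s + 1))
    (ht : t = (T - 1) % m + 1) (hk : k = (T - t) / m)
    (hβ : ∀ i, 1 ≤ i →
      (i ≤ t → (β (w i) : ℤ) = (α (w i) : ℤ) - (k + 1) * n) ∧
      (t < i → i ≤ m → (β (w i) : ℤ) = (α (w i) : ℤ) - k * n) ∧
      (m < i → i ≤ m + T → β (w i) = α (w i) + n) ∧
      (m + T < i → β (w i) = α (w i)))
    (hB : ∀ s l, s ≤ T →
      (B s l : ℤ) = (α l : ℤ) - (n : ℤ) *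
        ((((Finset.Icc 1 s).filter fun i => w ((i - 1) % m + 1) = l).card : ℤ) -
         (((Finset.Icc 1 s).filter fun i => w (m + i) = l).card : ℤ))) :
    (∀ l, B 0 l = α l) ∧
    (∀ l, 1 ≤ l → l ≤ N → B T l = β l) ∧
    (∀ s, s < T → tri N (B s) (B (s + 1))) ∧
    tri N α β := by
  have hwrnk i (hi : 1 ≤ i) : rnk N α (w i) = i := (hw i hi).2
  have hwinj : Set.InjOn w (Set.Ici 1) := fun i hi j hj h => by
    rw [← hwrnk i hi, ← hwrnk j hj, h]
  have hwmem i (hi : i ∈ Icc 1 N) : w i ∈ Icc 1 N :=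
    mem_Icc_of_rnk_eq hsupp (hw i (mem_Icc.mp hi).1).1 (hwrnk i (mem_Icc.mp hi).1) (mem_Icc.mp hi).2
  have hw₁ := hwmem 1 (mem_Icc.mpr ⟨le_rfl, hN⟩)
  have hS : #{l ∈ Icc 1 N | tilde N α (w 1) - n < tilde N α l} = m :=
    hm ▸ card_filter_tilde_gt hw₁ (fun l hl => tilde_le_tilde_of_rnk_le hw₁ hl
      ((hwrnk 1 le_rfl).trans_le (mem_Icc.mp (rnk_mem_Icc hl)).1)) hn1
  have hm₀ : 0 < m := by omega
  obtain ⟨hTmk, ht₁, htm⟩ := eq_mul_add_of_eq_sub_one_mod hm₀ hT1 ht hk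
  have hmT : m + T ≤ N := by
    have := hS ▸ card_filter_tilde_gt_le_len hw₁ (by omega) hn2
    have := mul_add_le_wt (hwinj.mono fun i hi => (mem_Icc.mp hi).1)
      (fun i hi => hwmem i (Icc_subset_Icc_right (by omega) hi)) hn1 htm
      (fun i hi => (hβ i hi).1) (fun i hi => (hβ i (by omega)).2.1 hi)
    omega
  have hB' s (hs : s ≤ T) l : (B s l : ℤ) = chainVec α w m n s l := hB s l hs
  have hstep s (hs : s < T) : tri N (B s) (B (s + 1)) :=
    tri_of_chainVec hwinj hwmem hm₀ hn1 (by omega) (hB' s hs.le) (hB' (s + 1) hs)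
      (tilde_le_tilde_sub_of_crossing hm₀ hmT hwmem hwrnk hS hξ hT2 hs)
  have h₀ l : B 0 l = α l := by exact_mod_cast (hB' 0 (Nat.zero_le _) l).trans (chainVec_zero l)
  have hend := eqOn_of_chainVec_end hwinj hwmem hwrnk hm₀ hTmk htm hβ (hB' T le_rfl)
  exact ⟨h₀, fun l hl₁ hlN => hend l (mem_Icc.mpr ⟨hl₁, hlN⟩), hstep,
    tri_congr (fun l _ => h₀ l) hend (tri_of_chain hT1 hstep)⟩

/-- the chain `β⁽⁰⁾ = α, β⁽¹⁾, …, β⁽ᵀ⁾ = β` with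
`β⁽ˢ⁾ = α - n Σ_{i=1}^s (ε(w((i-1) mod m + 1)) - ε(w(m+i)))` satisfies
`β⁽ˢ⁾ ▷ β⁽ˢ⁺¹⁾` for each `s < T`; consequently `α ▷ β`. -/
theorem chain_dominance (N : ℕ) (α β : ℕ → ℕ) (w : ℕ → ℕ) (m n T t k : ℕ)
    (B : ℕ → ℕ → ℕ) (ξ : ℕ → ℚ)
    (hN : 1 ≤ N)
    (hNfull : N = len N α + wt N α)
    (hsupp : ∀ i, N < i → α i = 0)
    (hw : ∀ i, 1 ≤ i → 1 ≤ w i ∧ rnk N α (w i) = i)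
    (hn1 : 1 ≤ n) (hn2 : n ≤ α (w 1))
    (hm : leg N α (w 1) (α (w 1) + 1 - n) + 1 = m)
    (hξ : ∀ k i, 1 ≤ i → i ≤ m → ξ (m * k + i) = tilde N α (w i) - (n : ℚ) * k)
    (hT1 : 1 ≤ T)
    (hT2 : ∀ s, 1 ≤ s → s < T → tilde N α (w (m + s)) < ξ (m + s + 1))
    (hT3 : ξ (m + T + 1) < tilde N α (w (m + T)))
    (ht : t = (T - 1) % m + 1) (hk : k = (T - t) / m)
    (hβ : ∀ i, 1 ≤ i →
      (i ≤ t → (β (w i) : ℤ) = (α (w i) : ℤ) - (k + 1) * n) ∧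
      (t < i → i ≤ m → (β (w i) : ℤ) = (α (w i) : ℤ) - k * n) ∧
      (m < i → i ≤ m + T → β (w i) = α (w i) + n) ∧
      (m + T < i → β (w i) = α (w i)))
    (hB : ∀ s l, s ≤ T →
      (B s l : ℤ) = (α l : ℤ) - (n : ℤ) *
        ((((Finset.Icc 1 s).filter fun i => w ((i - 1) % m + 1) = l).card : ℤ) -
         (((Finset.Icc 1 s).filter fun i => w (m + i) = l).card : ℤ))) :
    (∀ l, B 0 l = α l) ∧
    (∀ l, 1 ≤ l → l ≤ N → B T l = β l) ∧
    (∀ s, s < T → tri N (B s) (B (s + 1))) ∧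
    tri N α β :=
  chain_dominance_general N α β w m n T t k B ξ hN hNfull hsupp hw hn1 hn2 hm hξ hT1 hT2 ht hk hβ hB
end

section
/- The transitivity of critical pairs: if (α, β¹) and (β¹, β²) are both (−n/m)-critical pairs, then (α, β²) is a (−n/m)-critical pair. -/
lemma sdom_trans_s18 (N : ℕ) (a b c : ℕ → ℕ) (h1 : sdom N a b) (h2 : sdom N b c) :
    sdom N a c := by
  obtain ⟨⟨i, hi, hne⟩, hs1⟩ := h1
  obtain ⟨⟨j, hj, hne2⟩, hs2⟩ := h2
  refine ⟨?_, fun k hk => (hs2 k hk).trans (hs1 k hk)⟩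
  by_contra h
  push_neg at h
  have hsum : ∀ k ≤ N, ∑ x ∈ Finset.Icc 1 k, a x = ∑ x ∈ Finset.Icc 1 k, b x := by
    intro k hk
    have hac : ∑ x ∈ Finset.Icc 1 k, a x = ∑ x ∈ Finset.Icc 1 k, c x :=
      Finset.sum_congr rfl fun x hx => h x (Finset.mem_Icc.mpr
        ⟨(Finset.mem_Icc.mp hx).1, le_trans (Finset.mem_Icc.mp hx).2 hk⟩)
    have t1 := hs1 k hk
    have t2 := hs2 k hk
    omega
  obtain ⟨hi1, hi2⟩ := Finset.mem_Icc.mp hi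
  have ha : ∑ x ∈ Finset.Icc 1 i, a x = ∑ x ∈ Finset.Icc 1 (i-1), a x + a i := by
    have h' := Finset.sum_Icc_succ_top (a := 1) (b := i - 1)
      (show (1:ℕ) ≤ (i-1)+1 by omega) a
    rwa [Nat.sub_add_cancel hi1] at h'
  have hb : ∑ x ∈ Finset.Icc 1 i, b x = ∑ x ∈ Finset.Icc 1 (i-1), b x + b i := by
    have h' := Finset.sum_Icc_succ_top (a := 1) (b := i - 1)
      (show (1:ℕ) ≤ (i-1)+1 by omega) b
    rwa [Nat.sub_add_cancel hi1] at h'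
  have e1 := hsum i hi2
  have e2 := hsum (i-1) (by omega)
  exact hne (by omega)

lemma sdom_congr_left (N : ℕ) (a a' b : ℕ → ℕ) (h : ∀ i ∈ Finset.Icc 1 N, a i = a' i)
    (hs : sdom N a b) : sdom N a' b := by
  obtain ⟨⟨i, hi, hne⟩, hsum⟩ := hs
  refine ⟨⟨i, hi, by rw [← h i hi]; exact hne⟩, fun k hk => ?_⟩
  have : ∑ x ∈ Finset.Icc 1 k, a x = ∑ x ∈ Finset.Icc 1 k, a' x :=
    Finset.sum_congr rfl fun x hx => h x (Finset.mem_Icc.mpr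
      ⟨(Finset.mem_Icc.mp hx).1, le_trans (Finset.mem_Icc.mp hx).2 hk⟩)
  rw [← this]; exact hsum k hk

lemma sdom_congr_right (N : ℕ) (a b b' : ℕ → ℕ) (h : ∀ i ∈ Finset.Icc 1 N, b i = b' i)
    (hs : sdom N a b) : sdom N a b' := by
  obtain ⟨⟨i, hi, hne⟩, hsum⟩ := hs
  refine ⟨⟨i, hi, by rw [← h i hi]; exact hne⟩, fun k hk => ?_⟩
  have : ∑ x ∈ Finset.Icc 1 k, b x = ∑ x ∈ Finset.Icc 1 k, b' x :=
    Finset.sum_congr rfl fun x hx => h x (Finset.mem_Icc.mpr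
      ⟨(Finset.mem_Icc.mp hx).1, le_trans (Finset.mem_Icc.mp hx).2 hk⟩)
  rw [← this]; exact hsum k hk

/-- transitivity of critical pairs. -/
theorem critical_trans (N m n : ℕ) (α β₁ β₂ : ℕ → ℕ) (hm : 1 ≤ m) (hn : 1 ≤ n)
    (h1 : critical N m n α β₁) (h2 : critical N m n β₁ β₂) :
    critical N m n α β₂ := by
  obtain ⟨⟨hw1, ho1⟩, hc1⟩ := h1
  obtain ⟨⟨hw2, ho2⟩, hc2⟩ := h2
  refine ⟨⟨hw1.trans hw2, ?_⟩, fun i hi => ?_⟩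
  · rcases ho1 with hA | ⟨heq1, hs1⟩
    · rcases ho2 with hB | ⟨heq2, hs2⟩
      · exact Or.inl (sdom_trans_s18 N _ _ _ hA hB)
      · exact Or.inl (sdom_congr_right N _ _ _ heq2 hA)
    · rcases ho2 with hB | ⟨heq2, hs2⟩
      · exact Or.inl (sdom_congr_left N _ _ _ (fun i hi => (heq1 i hi).symm) hB)
      · exact Or.inr ⟨fun i hi => (heq1 i hi).trans (heq2 i hi),
          sdom_trans_s18 N _ _ _ hs1 hs2⟩
  · have e1 := hc1 i hi
    have e2 := hc2 i hi
    linear_combination e1 + e2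
end

section
/- With the notation of the construction, suppose for some s > T that α̃_{w(m+s)} − ξ_{m+s+1} > 0 and α̃_{w(m+s+1)} − ξ_{m+s+2} < 0. Write m+s+1 = ml + i with 1 ≤ i ≤ m. Then L(α; w(i), α_{w(i)} + 1 − nl) = ml − 1, i.e., the hook-length at node (w(i), α_{w(i)}+1−nl) equals l(mκ + n). -/
/-!
Put `ρ p := α̃_{w(p)}`. The `α̃_l` are distinct elements of `ℤ - ℕ/(N+1)`, ordered like the
pairs `(α_l, -l)`, so `ρ` is strictly decreasing, and beyond `N` it steps down by exactly
`1/(N+1)`. By the `α̃`-characterisation of leg-lengths, `L(α; w(i), α_{w(i)}+1-nl)` counts the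
`p ≤ N` with `ρ i - nl < ρ p < ρ i`. The choice of `m` forces `ρ 1 - n < ρ m`, which makes `ξ`
strictly decreasing, so the sign change gives `ρ (m+s+1) < ξ (m+s+1) = ρ i - nl < ρ (m+s)`.
Being of the same shape as the `α̃_l`, `ξ (m+s+1)` cannot fall strictly between two consecutive
values of `ρ` beyond `N`; hence `m + s ≤ N` and the counted indices are exactly `i+1, …, m+s`.
-/

namespace HookLength

open Finset

lemma sub_div_lt_sub_div_iff (N : ℕ) (a b x y : ℤ) :
    (a : ℚ) - x / (N + 1) < b - y / (N + 1) ↔ (a - b) * (N + 1) < x - y := by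
  have key : (b - y / (N + 1) : ℚ) - (a - x / (N + 1)) =
      ((x - y - (a - b) * (N + 1) : ℤ) : ℚ) / (N + 1) := by
    push_cast; field_simp; ring
  rw [← sub_pos, key, div_pos_iff_of_pos_right (by positivity), Int.cast_pos, sub_pos]

lemma mul_succ_lt_sub_iff {N x y : ℕ} (c : ℤ) (hx : x ≤ N) (hy : y ≤ N) :
    c * (N + 1) < (x : ℤ) - y ↔ c < 0 ∨ c = 0 ∧ y < x := by
  rcases lt_trichotomy c 0 with h | rfl | h
  · simp only [h, true_or, iff_true]; nlinarith
  · simp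
  · simp only [h.not_gt, h.ne', false_or, false_and, iff_false, not_lt]; nlinarith

variable {N : ℕ} {α : ℕ → ℕ}

lemma tilde_lt_tilde_iff {x y : ℕ} (hx : x ≤ N) (hy : y ≤ N) :
    tilde N α x < tilde N α y ↔ α x < α y ∨ α x = α y ∧ y < x := by
  have h := sub_div_lt_sub_div_iff N (α x) (α y) x y
  push_cast at h
  rw [tilde, tilde, h, mul_succ_lt_sub_iff _ hx hy]
  omega

lemma sub_lt_tilde_iff {x y : ℕ} (hx : x ≤ N) (hy : y ≤ N) (j : ℕ) :
    (j : ℚ) - 1 - x / (N + 1) < tilde N α y ↔ j ≤ α y ∨ j = α y + 1 ∧ y < x := by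
  have h := sub_div_lt_sub_div_iff N (j - 1) (α y) x y
  push_cast at h
  rw [tilde, h, mul_succ_lt_sub_iff _ hx hy]
  omega

lemma rnk_eq_card {x : ℕ} (hx : x ≤ N) :
    rnk N α x = #{y ∈ Icc 1 N | tilde N α x ≤ tilde N α y} := by
  have hle : (Icc 1 x).filter (fun y => α y = α x) =
      (Icc 1 N).filter (fun y => α y = α x ∧ y ≤ x) := by
    ext y; simp only [mem_filter, mem_Icc]; omega
  rw [rnk, hle, ← card_union_of_disjoint (disjoint_filter.2 fun y _ h h' => by omega),
    ← filter_or]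
  congr 1
  refine filter_congr fun y hy => ?_
  symm
  rw [← not_lt, tilde_lt_tilde_iff (mem_Icc.mp hy).2 hx]
  omega

lemma rnk_of_lt (hsupp : ∀ i, N < i → α i = 0) {x : ℕ} (hx : N < x) : rnk N α x = x := by
  have hne : #{y ∈ Icc 1 x | ¬ α y = 0} = #{y ∈ Icc 1 N | α x < α y} := by
    rw [hsupp x hx]
    congr 1; ext y; simp only [mem_filter, mem_Icc]
    have := hsupp y
    omega
  have hsplit := card_filter_add_card_filter_not (s := Icc 1 x) (fun y => α y = 0)
  rw [Nat.card_Icc, hne, hsupp x hx] at hsplit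
  rw [rnk, hsupp x hx]
  omega

lemma rnk_le_rnk_of_tilde_le {x y : ℕ} (hx : x ≤ N) (hy : y ≤ N)
    (h : tilde N α x ≤ tilde N α y) : rnk N α y ≤ rnk N α x := by
  rw [rnk_eq_card hx, rnk_eq_card hy]
  exact card_le_card fun z hz => by
    simp only [mem_filter] at hz ⊢
    exact ⟨hz.1, h.trans hz.2⟩

lemma rnk_le {x : ℕ} (hx : x ≤ N) : rnk N α x ≤ N := by
  rw [rnk_eq_card hx]
  exact (card_filter_le _ _).trans (by simp)

lemma leg_eq_card {x : ℕ} (hx : x ≤ N) (j : ℕ) :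
    leg N α x j =
      #{y ∈ Icc 1 N | (j : ℚ) - 1 - x / (N + 1) < tilde N α y ∧ tilde N α y < tilde N α x} := by
  rw [leg, ← card_union_of_disjoint (disjoint_filter.2 fun y _ h h' => by omega), ← filter_or]
  congr 1
  refine filter_congr fun y hy => ?_
  have hyN := (mem_Icc.mp hy).2
  rw [sub_lt_tilde_iff hx hyN, tilde_lt_tilde_iff hyN hx]
  rcases eq_or_ne y x with rfl | hyx
  · simp
  · omega

section Generic

variable {β : Type*} [LinearOrder β] {ρ : ℕ → β}

lemma filter_Ioo_eq_Icc_of_strictAntiOn (hρ : StrictAntiOn ρ (Set.Ici 1)) {N i b : ℕ} {c : β}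
    (hi : 1 ≤ i) (hbN : b ≤ N) (hcb : c < ρ b) (hbc : ρ (b + 1) ≤ c) :
    {p ∈ Icc 1 N | c < ρ p ∧ ρ p < ρ i} = Icc (i + 1) b := by
  ext p
  simp only [mem_filter, mem_Icc]
  constructor
  · rintro ⟨⟨hp, -⟩, hcp, hpi⟩
    refine ⟨(hρ.lt_iff_gt hp hi).1 hpi, ?_⟩
    by_contra! hbp
    exact (hbc.trans_lt hcp).not_ge
      (hρ.antitoneOn (Set.mem_Ici.2 (by omega)) (Set.mem_Ici.2 hp) hbp)
  · rintro ⟨hip, hpb⟩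
    have hp : (1 : ℕ) ≤ p := by omega
    exact ⟨⟨hp, hpb.trans hbN⟩,
      hcb.trans_le (hρ.antitoneOn hp (Set.mem_Ici.2 (by omega)) hpb),
      (hρ.lt_iff_gt hp hi).2 (by omega)⟩

lemma lt_of_card_filter_Ioo (hρ : StrictAntiOn ρ (Set.Ici 1)) {N i k : ℕ} {c : β}
    (hi : 1 ≤ i) (hc : c < ρ i) (hk : #{p ∈ Icc 1 N | c < ρ p ∧ ρ p < ρ i} = k) :
    c < ρ (i + k) := by
  by_contra! hkc
  have hsub : {p ∈ Icc 1 N | c < ρ p ∧ ρ p < ρ i} ⊆ Ioo i (i + k) := fun p hp => by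
    simp only [mem_filter, mem_Icc] at hp
    obtain ⟨⟨hp1, -⟩, hcp, hpi⟩ := hp
    exact mem_Ioo.2 ⟨(hρ.lt_iff_gt hp1 hi).1 hpi,
      (hρ.lt_iff_gt (Set.mem_Ici.2 (by omega)) hp1).1 (hkc.trans_lt hcp)⟩
  have := card_le_card hsub
  rw [Nat.card_Ioo] at this
  rcases k with _ | k
  · exact hkc.not_gt (by simpa using hc)
  · omega

end Generic

lemma xi_succ_lt {K : Type*} [CommRing K] [LinearOrder K] [IsOrderedRing K]
    {ρ ξ : ℕ → K} {m n : ℕ} (hρ : StrictAntiOn ρ (Set.Ici 1)) (hρm : ρ 1 - n < ρ m)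
    (hξ : ∀ k i, 1 ≤ i → i ≤ m → ξ (m * k + i) = ρ i - n * k) {k i : ℕ} (hi : 1 ≤ i)
    (him : i ≤ m) : ξ (m * k + i + 1) < ξ (m * k + i) := by
  rw [hξ k i hi him]
  rcases him.lt_or_eq with him | rfl
  · rw [add_assoc, hξ k (i + 1) (by omega) him]
    exact sub_lt_sub_right (hρ (Set.mem_Ici.2 hi) (Set.mem_Ici.2 (by omega)) (by omega)) _
  · rw [show i * k + i + 1 = i * (k + 1) + 1 by ring, hξ (k + 1) 1 le_rfl hi, Nat.cast_succ,
      mul_add_one, ← sub_sub, sub_right_comm]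
    exact sub_lt_sub_right hρm _

section RankInverse

variable {w : ℕ → ℕ}

lemma w_le (hsupp : ∀ i, N < i → α i = 0)
    (hw : ∀ i, 1 ≤ i → 1 ≤ w i ∧ rnk N α (w i) = i)
    {p : ℕ} (hp : 1 ≤ p) (hpN : p ≤ N) : w p ≤ N := by
  by_contra! h
  have := (hw p hp).2
  rw [rnk_of_lt hsupp h] at this
  omega

lemma w_of_lt (hsupp : ∀ i, N < i → α i = 0)
    (hw : ∀ i, 1 ≤ i → 1 ≤ w i ∧ rnk N α (w i) = i)
    {p : ℕ} (hp : N < p) : w p = p := by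
  obtain ⟨hwp, hrnk⟩ := hw p (by omega)
  rcases le_or_gt (w p) N with hwN | hwN
  · have := rnk_le (α := α) hwN
    omega
  · rwa [rnk_of_lt hsupp hwN] at hrnk

lemma card_filter_comp_w (hsupp : ∀ i, N < i → α i = 0)
    (hw : ∀ i, 1 ≤ i → 1 ≤ w i ∧ rnk N α (w i) = i) (P : ℕ → Prop) [DecidablePred P] :
    #{y ∈ Icc 1 N | P y} = #{p ∈ Icc 1 N | P (w p)} := by
  have hinj : Set.InjOn w (Icc 1 N : Finset ℕ) := fun p hp q hq h => by
    rw [← (hw p (mem_Icc.1 hp).1).2, h, (hw q (mem_Icc.1 hq).1).2]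
  have himage : (Icc 1 N).image w = Icc 1 N := by
    refine eq_of_subset_of_card_le (image_subset_iff.2 fun p hp => ?_)
      (card_image_of_injOn hinj).ge
    obtain ⟨hp1, hpN⟩ := mem_Icc.1 hp
    exact mem_Icc.2 ⟨(hw p hp1).1, w_le hsupp hw hp1 hpN⟩
  conv_lhs => rw [← himage]
  rw [filter_image, card_image_of_injOn (hinj.mono (coe_subset.2 (filter_subset _ _)))]

lemma strictAntiOn_tilde_w (hsupp : ∀ i, N < i → α i = 0)
    (hw : ∀ i, 1 ≤ i → 1 ≤ w i ∧ rnk N α (w i) = i) :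
    StrictAntiOn (fun p => tilde N α (w p)) (Set.Ici 1) := by
  intro p hp q hq hpq
  simp only [Set.mem_Ici] at hp hq ⊢
  rcases le_or_gt q N with hqN | hNq
  · by_contra! h
    have := rnk_le_rnk_of_tilde_le (w_le hsupp hw hp (by omega)) (w_le hsupp hw hq hqN) h
    rw [(hw p hp).2, (hw q hq).2] at this
    omega
  · have hwp : w p < q := by
      rcases le_or_gt p N with hpN | hNp
      · exact (w_le hsupp hw hp hpN).trans_lt hNq
      · rwa [w_of_lt hsupp hw hNp]
    have h := sub_div_lt_sub_div_iff N 0 (α (w p)) q (w p)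
    push_cast at h
    rw [w_of_lt hsupp hw hNq, tilde, hsupp q hNq, tilde, Nat.cast_zero, h]
    nlinarith

lemma tilde_w_le_of_tilde_w_succ_lt (hsupp : ∀ i, N < i → α i = 0)
    (hw : ∀ i, 1 ≤ i → 1 ≤ w i ∧ rnk N α (w i) = i) {p x : ℕ} {a : ℤ} (hp : N < p)
    (h : tilde N α (w (p + 1)) < tilde N α x - a) : tilde N α (w p) ≤ tilde N α x - a := by
  have hx : tilde N α x - a = ((α x - a : ℤ) : ℚ) - ((x : ℤ) : ℚ) / (N + 1) := by
    rw [tilde]; push_cast; ring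
  have hq : ∀ q, N < q → tilde N α (w q) = ((0 : ℤ) : ℚ) - ((q : ℤ) : ℚ) / (N + 1) :=
      fun q hq => by
    rw [w_of_lt hsupp hw hq, tilde, hsupp q hq]; push_cast; ring
  rw [hx, hq _ (by omega), sub_div_lt_sub_div_iff] at h
  rw [hx, hq _ hp, ← not_lt, sub_div_lt_sub_div_iff]
  push_cast at h ⊢
  nlinarith

lemma leg_w_eq_card (hsupp : ∀ i, N < i → α i = 0)
    (hw : ∀ i, 1 ≤ i → 1 ≤ w i ∧ rnk N α (w i) = i) {i j : ℕ} (hi : 1 ≤ i) (hiN : i ≤ N)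
    {d : ℚ} (hj : (j : ℚ) = α (w i) + 1 - d) :
    leg N α (w i) j =
      #{p ∈ Icc 1 N |
        tilde N α (w i) - d < tilde N α (w p) ∧ tilde N α (w p) < tilde N α (w i)} := by
  have hend : (j : ℚ) - 1 - (w i : ℕ) / (N + 1) = tilde N α (w i) - d := by
    rw [hj, tilde]; ring
  rw [leg_eq_card (w_le hsupp hw hi hiN), hend]
  exact card_filter_comp_w hsupp hw
    (fun y => tilde N α (w i) - d < tilde N α y ∧ tilde N α y < tilde N α (w i))

lemma tilde_w_one_sub_lt (hsupp : ∀ i, N < i → α i = 0)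
    (hw : ∀ i, 1 ≤ i → 1 ≤ w i ∧ rnk N α (w i) = i) {m n : ℕ} (hN : 1 ≤ N) (hn1 : 1 ≤ n)
    (hn2 : n ≤ α (w 1)) (hm : leg N α (w 1) (α (w 1) + 1 - n) + 1 = m) :
    tilde N α (w 1) - n < tilde N α (w m) := by
  have hleg := leg_w_eq_card hsupp hw le_rfl hN (j := α (w 1) + 1 - n) (d := n)
    (by rw [Nat.cast_sub (by omega)]; push_cast; ring)
  have h := lt_of_card_filter_Ioo (strictAntiOn_tilde_w hsupp hw) le_rfl
    (sub_lt_self _ (by exact_mod_cast hn1)) (hleg.symm.trans (show _ = m - 1 by omega))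
  rwa [show 1 + (m - 1) = m by omega] at h

end RankInverse

end HookLength

open HookLength

theorem sign_change_hook_general (N : ℕ) (α : ℕ → ℕ) (w : ℕ → ℕ) (m n s l i : ℕ) (ξ : ℕ → ℚ)
    (hN : 1 ≤ N)
    (hsupp : ∀ i, N < i → α i = 0)
    (hw : ∀ i, 1 ≤ i → 1 ≤ w i ∧ rnk N α (w i) = i)
    (hn1 : 1 ≤ n) (hn2 : n ≤ α (w 1))
    (hm : leg N α (w 1) (α (w 1) + 1 - n) + 1 = m)
    (hξ : ∀ k i, 1 ≤ i → i ≤ m → ξ (m * k + i) = tilde N α (w i) - (n : ℚ) * k)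
    (hpos : 0 < tilde N α (w (m + s)) - ξ (m + s + 1))
    (hneg : tilde N α (w (m + s + 1)) - ξ (m + s + 2) < 0)
    (hi1 : 1 ≤ i) (him : i ≤ m) (hli : m + s + 1 = m * l + i) :
    ∀ j : ℕ, (j : ℤ) = (α (w i) : ℤ) + 1 - (n : ℤ) * l →
      (leg N α (w i) j : ℤ) = (m : ℤ) * l - 1 := by
  intro j hj
  have hρ := strictAntiOn_tilde_w hsupp hw
  have hξi : ξ (m + s + 1) = tilde N α (w i) - n * l := hli ▸ hξ l i hi1 him
  have hξ_succ : ξ (m + s + 2) < ξ (m + s + 1) := by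
    have := xi_succ_lt hρ (tilde_w_one_sub_lt hsupp hw hN hn1 hn2 hm) hξ hi1 him (k := l)
    rwa [← hli] at this
  have hnext : tilde N α (w (m + s + 1)) < tilde N α (w i) - ((n * l : ℕ) : ℤ) := by
    push_cast; linarith
  have hmsN : m + s ≤ N := by
    by_contra! h
    exact (tilde_w_le_of_tilde_w_succ_lt hsupp hw h hnext).not_gt (by push_cast; linarith)
  have hwindow := filter_Ioo_eq_Icc_of_strictAntiOn hρ hi1 hmsN
    (c := tilde N α (w i) - n * l) (by linarith) (by push_cast at hnext; exact hnext.le)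
  rw [leg_w_eq_card hsupp hw hi1 (by omega) (d := n * l) (by exact_mod_cast hj), hwindow,
    Nat.card_Icc]
  push_cast
  omega

/-- a sign change of `(α̃_{w(m+s)} - ξ_{m+s+1})_s` beyond `T` locates a
hook-length divisible by `mκ + n`: writing `m+s+1 = ml+i` with `1 ≤ i ≤ m`, the
leg-length at the node `(w(i), α_{w(i)}+1-nl)` is `ml - 1` (so the hook-length there
equals `l(mκ+n)`). -/
theorem sign_change_hook (N : ℕ) (α : ℕ → ℕ) (w : ℕ → ℕ) (m n T s l i : ℕ) (ξ : ℕ → ℚ)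
    (hN : 1 ≤ N)
    (hNfull : N = len N α + wt N α)
    (hsupp : ∀ i, N < i → α i = 0)
    (hw : ∀ i, 1 ≤ i → 1 ≤ w i ∧ rnk N α (w i) = i)
    (hn1 : 1 ≤ n) (hn2 : n ≤ α (w 1))
    (hm : leg N α (w 1) (α (w 1) + 1 - n) + 1 = m)
    (hξ : ∀ k i, 1 ≤ i → i ≤ m → ξ (m * k + i) = tilde N α (w i) - (n : ℚ) * k)
    (hT1 : 1 ≤ T)
    (hT2 : ∀ s', 1 ≤ s' → s' < T → tilde N α (w (m + s')) < ξ (m + s' + 1))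
    (hT3 : ξ (m + T + 1) < tilde N α (w (m + T)))
    (hs : T < s)
    (hpos : 0 < tilde N α (w (m + s)) - ξ (m + s + 1))
    (hneg : tilde N α (w (m + s + 1)) - ξ (m + s + 2) < 0)
    (hi1 : 1 ≤ i) (him : i ≤ m) (hli : m + s + 1 = m * l + i) :
    ∀ j : ℕ, (j : ℤ) = (α (w i) : ℤ) + 1 - (n : ℤ) * l →
      (leg N α (w i) j : ℤ) = (m : ℤ) * l - 1 :=
  sign_change_hook_general N α w m n s l i ξ hN hsupp hw hn1 hn2 hm hξ hpos hneg hi1 him hli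
end
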